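/- arXiv:1906.03578 — 10 statements merged into one kernel-verified Lean document; each statement's English description precedes it below -/
import Mathlib

section
/- Let G be a group with a word norm ‖·‖ coming from a finite generating set, acting on the circle by homeomorphisms. For a subset E ⊆ G define U_E as the set of points x ∈ S¹ admitting an open neighbourhood I_x such that sup{|g(I_x)| : g ∉ E, ‖g‖ ≥ n} → 0 as n → ∞. Then for every h ∈ G and every subset E ⊆ G, one has U_{Eh} = h⁻¹(U_E). -/
open MeasureTheory
open scoped ENNReal

noncomputable section

/-- The circle `ℝ/ℤ`. -/
abbrev 𝕊 : Type := AddCircle (1 : ℝ)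

/-- The set `U_E`: points admitting an open neighbourhood `I` such that
`sup {|g(I)| : g ∉ E, ‖g‖ ≥ n} → 0` as `n → ∞`, where `|·|` is the Haar (length)
measure on the circle and `‖·‖` is the word norm. -/
def USet {G : Type*} [Group G] (ρ : G →* Equiv.Perm 𝕊) (wnorm : G → ℕ) (E : Set G) :
    Set 𝕊 :=
  {x | ∃ I : Set 𝕊, IsOpen I ∧ x ∈ I ∧
    ∀ ε : ℝ≥0∞, 0 < ε → ∃ N : ℕ, ∀ g : G, g ∉ E → N ≤ wnorm g →
      volume ((ρ g) '' I) < ε}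

section Aux

variable {G : Type*} [Group G] (S : Finset G)

/-- The word set is nonempty for every `g`. -/
lemma word_set_nonempty (hS : Subgroup.closure (S : Set G) = ⊤) (g : G) :
    {n : ℕ | ∃ l : List G, (∀ x ∈ l, x ∈ S ∨ x⁻¹ ∈ S) ∧ l.prod = g ∧ l.length = n}.Nonempty := by
  have hg : g ∈ Submonoid.closure ((S : Set G) ∪ (S : Set G)⁻¹) := by
    rw [← Subgroup.closure_toSubmonoid, hS]
    trivial
  obtain ⟨l, hl, hprod⟩ := Submonoid.exists_list_of_mem_closure hg
  refine ⟨l.length, l, fun x hx => ?_, hprod, rfl⟩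
  rcases hl x hx with h | h
  · exact Or.inl h
  · exact Or.inr (by simpa using h)

lemma wnorm_mul_le (hS : Subgroup.closure (S : Set G) = ⊤)
    (wnorm : G → ℕ)
    (hnorm : ∀ g : G, wnorm g =
      sInf {n : ℕ | ∃ l : List G, (∀ x ∈ l, x ∈ S ∨ x⁻¹ ∈ S) ∧ l.prod = g ∧ l.length = n})
    (a b : G) : wnorm (a * b) ≤ wnorm a + wnorm b := by
  obtain ⟨la, hla, hpa, hLa⟩ := Nat.sInf_mem (word_set_nonempty S hS a)
  obtain ⟨lb, hlb, hpb, hLb⟩ := Nat.sInf_mem (word_set_nonempty S hS b)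
  rw [hnorm (a * b), hnorm a, hnorm b, ← hLa, ← hLb]
  apply Nat.sInf_le
  refine ⟨la ++ lb, fun x hx => ?_, by simp [hpa, hpb], by simp⟩
  rcases List.mem_append.mp hx with h | h
  · exact hla x h
  · exact hlb x h

end Aux

lemma USet_translate_subset {G : Type*} [Group G] (ρ : G →* Equiv.Perm 𝕊)
    (hcont : ∀ g : G, Continuous (ρ g))
    (S : Finset G) (hS : Subgroup.closure (S : Set G) = ⊤)
    (wnorm : G → ℕ)
    (hnorm : ∀ g : G, wnorm g =
      sInf {n : ℕ | ∃ l : List G, (∀ x ∈ l, x ∈ S ∨ x⁻¹ ∈ S) ∧ l.prod = g ∧ l.length = n})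
    (h : G) (E : Set G) :
    (ρ h) ⁻¹' (USet ρ wnorm E) ⊆ USet ρ wnorm ((· * h) '' E) := by
  intro x hx
  obtain ⟨I, hIopen, hxI, hI⟩ := hx
  refine ⟨(ρ h) ⁻¹' I, hIopen.preimage (hcont h), hxI, fun ε hε => ?_⟩
  obtain ⟨N, hN⟩ := hI ε hε
  refine ⟨N + wnorm h, fun g hg hng => ?_⟩
  have hkey : ⇑(ρ g) '' (⇑(ρ h) ⁻¹' I) = ⇑(ρ (g * h⁻¹)) '' I := by
    have h1 : ⇑(ρ h) ⁻¹' I = ⇑(ρ h⁻¹) '' I := by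
      rw [map_inv]
      exact ((ρ h).symm.image_eq_preimage_symm I).symm
    rw [h1, Set.image_image, map_mul]
    rfl
  rw [hkey]
  refine hN (g * h⁻¹) (fun hc => hg ?_) ?_
  · exact ⟨g * h⁻¹, hc, by group⟩
  · have := wnorm_mul_le S hS wnorm hnorm (g * h⁻¹) h
    rw [inv_mul_cancel_right] at this
    omega

/-- If `G` is a group with a word norm coming from a finite generating set, acting on the
circle by homeomorphisms, then for every `h ∈ G` and `E ⊆ G` one has
`U_{Eh} = h⁻¹(U_E)`. -/
theorem USet_right_translate {G : Type*} [Group G] (ρ : G →* Equiv.Perm 𝕊)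
    (hcont : ∀ g : G, Continuous (ρ g))
    (S : Finset G) (hS : Subgroup.closure (S : Set G) = ⊤)
    (wnorm : G → ℕ)
    (hnorm : ∀ g : G, wnorm g =
      sInf {n : ℕ | ∃ l : List G, (∀ x ∈ l, x ∈ S ∨ x⁻¹ ∈ S) ∧ l.prod = g ∧ l.length = n})
    (h : G) (E : Set G) :
    USet ρ wnorm ((· * h) '' E) = (ρ h) ⁻¹' (USet ρ wnorm E) := by
  apply Set.Subset.antisymm
  · intro x hx
    have key := USet_translate_subset ρ hcont S hS wnorm hnorm h⁻¹ ((· * h) '' E)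
    have hE : ((· * h⁻¹) '' ((· * h) '' E)) = E := by
      ext e
      simp only [Set.mem_image]
      constructor
      · rintro ⟨y, ⟨z, hz, rfl⟩, rfl⟩
        simpa using hz
      · intro he
        exact ⟨e * h, ⟨e, he, rfl⟩, by group⟩
    rw [hE] at key
    have hx' : ρ h x ∈ ⇑(ρ h⁻¹) ⁻¹' (USet ρ wnorm ((· * h) '' E)) := by
      simp only [Set.mem_preimage, map_inv]
      simpa using hx
    exact key hx'
  · exact USet_translate_subset ρ hcont S hS wnorm hnorm h E
end
end

section
/- Let G be a group of circle homeomorphisms whose unique minimal invariant set Λ is infinite, and let H ⊆ G be a subgroup of finite index. Then Λ is also the unique minimal invariant set for the action of H; in particular Λ is H-invariant and the H-action on Λ is minimal. -/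
noncomputable section

/-- A bijection of the circle is orientation preserving if it lifts to a strictly
increasing bijection of `ℝ` commuting with the translation by `1`. -/
def OrientationPreserving (f : 𝕊 → 𝕊) : Prop :=
  ∃ F : ℝ → ℝ, StrictMono F ∧ Function.Surjective F ∧ (∀ x, F (x + 1) = F x + 1) ∧
    ∀ x : ℝ, f (x : 𝕊) = (F x : 𝕊)

/-- `Λ` is a minimal invariant set for the action `ρ`: nonempty, closed, invariant, and
with no proper nonempty closed invariant subset. -/
def IsMinimalInvariant {G : Type*} [Group G] (ρ : G →* Equiv.Perm 𝕊) (Λ : Set 𝕊) : Prop :=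
  Λ.Nonempty ∧ IsClosed Λ ∧ (∀ g : G, (ρ g) '' Λ = Λ) ∧
    ∀ Λ' : Set 𝕊, Λ' ⊆ Λ → Λ'.Nonempty → IsClosed Λ' → (∀ g : G, (ρ g) '' Λ' = Λ') → Λ' = Λ

namespace CMAux

instance : Fact ((0:ℝ) < 1) := ⟨one_pos⟩

lemma continuous_coe : Continuous ((↑) : ℝ → 𝕊) := AddCircle.continuous_mk' 1

lemma coe_surj : Function.Surjective ((↑) : ℝ → 𝕊) := QuotientAddGroup.mk_surjective

lemma dist_coe_le (x y : ℝ) : dist (x : 𝕊) (y : 𝕊) ≤ |x - y| := by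
  rw [dist_eq_norm, ← AddCircle.coe_sub]
  simpa only [Real.norm_eq_abs] using QuotientAddGroup.norm_mk_le_norm (m := x - y)

lemma coe_int_add (x : ℝ) (n : ℤ) : ((x + n : ℝ) : 𝕊) = (x : 𝕊) := by
  rw [AddCircle.coe_add]
  simp [AddCircle.coe_eq_zero_iff]

/-- A `δ`-separated subset of `[0,1)` is finite. -/
lemma sep_finite {δ : ℝ} (hδ : 0 < δ) {s : Set ℝ} (hs : s ⊆ Set.Ico (0:ℝ) 1)
    (hsep : ∀ x ∈ s, ∀ y ∈ s, x < y → x + δ ≤ y) : s.Finite := by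
  have key : ∀ x ∈ s, ∀ y ∈ s, x < y → ⌊x / δ⌋ + 1 ≤ ⌊y / δ⌋ := by
    intro x hx y hy hxy
    have h1 : x + δ ≤ y := hsep x hx y hy hxy
    have h2 : x / δ + 1 ≤ y / δ := by
      rw [div_add' _ _ _ hδ.ne']
      exact (div_le_div_iff_of_pos_right hδ).2 (by linarith)
    calc ⌊x / δ⌋ + 1 = ⌊x / δ + 1⌋ := (Int.floor_add_one _).symm
      _ ≤ ⌊y / δ⌋ := Int.floor_le_floor h2
  have hinj : Set.InjOn (fun x => ⌊x / δ⌋) s := by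
    intro x hx y hy hxy
    by_contra hne
    rcases lt_or_gt_of_ne hne with h | h
    · have := key x hx y hy h; simp only at hxy; omega
    · have := key y hy x hx h; simp only at hxy; omega
  have himg : (fun x => ⌊x / δ⌋) '' s ⊆ Set.Icc (0 : ℤ) ⌈1 / δ⌉ := by
    rintro _ ⟨x, hx, rfl⟩
    obtain ⟨hx0, hx1⟩ := hs hx
    constructor
    · exact Int.floor_nonneg.2 (div_nonneg hx0 hδ.le)
    · have : x / δ ≤ 1 / δ := (div_le_div_iff_of_pos_right hδ).2 hx1.le
      calc ⌊x / δ⌋ ≤ ⌊(1:ℝ) / δ⌋ := Int.floor_le_floor this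
        _ ≤ ⌈(1:ℝ) / δ⌉ := Int.floor_le_ceil _
  exact Set.Finite.of_finite_image ((Set.finite_Icc _ _).subset himg) hinj

variable {G : Type*} [Group G] (ρ : G →* Equiv.Perm 𝕊)

lemma image_mul (g h : G) (S : Set 𝕊) : ρ (g * h) '' S = ρ g '' (ρ h '' S) := by
  rw [← Set.image_comp, map_mul]; rfl

lemma image_one (S : Set 𝕊) : ρ (1 : G) '' S = S := by
  rw [map_one]; exact Set.image_id' S

lemma image_inv_image (g : G) (S : Set 𝕊) : ρ g⁻¹ '' (ρ g '' S) = S := by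
  rw [← image_mul, inv_mul_cancel, image_one]

lemma image_image_inv (g : G) (S : Set 𝕊) : ρ g '' (ρ g⁻¹ '' S) = S := by
  rw [← image_mul, mul_inv_cancel, image_one]

lemma mem_image_iff (g : G) (S : Set 𝕊) (x : 𝕊) : ρ g x ∈ ρ g '' S ↔ x ∈ S := by
  constructor
  · rintro ⟨y, hy, he⟩; rwa [(ρ g).injective he] at hy
  · exact fun h => ⟨x, h, rfl⟩

lemma mem_invariant_iff {g : G} {S : Set 𝕊} (hS : ρ g '' S = S) (x : 𝕊) :
    ρ g x ∈ S ↔ x ∈ S := by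
  conv_lhs => rw [← hS]
  exact mem_image_iff ρ g S x

/-- Invariance from one-sided invariance for all group elements. -/
lemma invariant_of_subset {S : Set 𝕊} (h : ∀ g : G, ρ g '' S ⊆ S) (g : G) :
    ρ g '' S = S := by
  refine le_antisymm (h g) ?_
  have := Set.image_mono (f := ρ g) (h g⁻¹)
  rwa [image_image_inv] at this

lemma apply_inv_apply (g : G) (x : 𝕊) : ρ g (ρ g⁻¹ x) = x := by
  rw [map_inv]; exact Equiv.apply_symm_apply _ _

lemma inv_apply_apply (g : G) (x : 𝕊) : ρ g⁻¹ (ρ g x) = x := by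
  rw [map_inv]; exact Equiv.symm_apply_apply _ _

lemma invariant_of_subset_subgroup {N : Subgroup G} {S : Set 𝕊}
    (h : ∀ n ∈ N, ρ n '' S ⊆ S) : ∀ n ∈ N, ρ n '' S = S := by
  intro n hn
  refine le_antisymm (h n hn) ?_
  have := Set.image_mono (f := ρ n) (h n⁻¹ (inv_mem hn))
  rwa [image_image_inv] at this

lemma isClosed_image (hcont : ∀ g : G, Continuous (ρ g)) {S : Set 𝕊} (hS : IsClosed S)
    (g : G) : IsClosed (ρ g '' S) :=
  (hS.isCompact.image (hcont g)).isClosed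

/-- `M` is minimal invariant for the subgroup `N`. -/
def MinFor (N : Subgroup G) (M : Set 𝕊) : Prop :=
  M.Nonempty ∧ IsClosed M ∧ (∀ n ∈ N, ρ n '' M = M) ∧
    ∀ M' : Set 𝕊, M' ⊆ M → M'.Nonempty → IsClosed M' → (∀ n ∈ N, ρ n '' M' = M') → M' = M

/-- Zorn: every nonempty closed invariant set contains a minimal one. -/
lemma exists_minFor (hcont : ∀ g : G, Continuous (ρ g)) (N : Subgroup G) (C : Set 𝕊)
    (hne : C.Nonempty) (hcl : IsClosed C) (hinv : ∀ n ∈ N, ρ n '' C = C) :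
    ∃ M, M ⊆ C ∧ MinFor ρ N M := by
  set 𝒮 : Set (Set 𝕊) := {A | A ⊆ C ∧ A.Nonempty ∧ IsClosed A ∧ ∀ n ∈ N, ρ n '' A = A}
    with h𝒮
  have hCS : C ∈ 𝒮 := ⟨subset_rfl, hne, hcl, hinv⟩
  have hH : ∀ c ⊆ 𝒮, IsChain (· ⊆ ·) c → c.Nonempty → ∃ lb ∈ 𝒮, ∀ s ∈ c, lb ⊆ s := by
    intro c hcS hchain hcne
    refine ⟨⋂₀ c, ?_, fun s hs => Set.sInter_subset_of_mem hs⟩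
    obtain ⟨A₀, hA₀⟩ := hcne
    have hcl' : ∀ A ∈ c, IsClosed A := fun A hA => (hcS hA).2.2.1
    have hnon : (⋂₀ c).Nonempty := by
      haveI : Nonempty c := ⟨⟨A₀, hA₀⟩⟩
      refine IsCompact.nonempty_sInter_of_directed_nonempty_isCompact_isClosed ?_
        (fun A hA => (hcS hA).2.1) (fun A hA => ((hcl' A hA).isCompact)) hcl'
      intro a ha b hb
      rcases eq_or_ne a b with rfl | hab
      · exact ⟨a, ha, subset_rfl, subset_rfl⟩
      · rcases hchain ha hb hab with h | h
        · exact ⟨a, ha, subset_rfl, h⟩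
        · exact ⟨b, hb, h, subset_rfl⟩
    refine ⟨(Set.sInter_subset_of_mem hA₀).trans (hcS hA₀).1, hnon,
      isClosed_sInter hcl', invariant_of_subset_subgroup ρ ?_⟩
    rintro n hn x ⟨y, hy, rfl⟩ A hA
    rw [← (hcS hA).2.2.2 n hn]
    exact ⟨y, hy A hA, rfl⟩
  obtain ⟨m, hmC, hmem, hmin⟩ := zorn_superset_nonempty 𝒮 hH C hCS
  exact ⟨m, hmC, hmem.2.1, hmem.2.2.1, hmem.2.2.2, fun M' hM'sub hM'ne hM'cl hM'inv =>
    le_antisymm hM'sub (hmin ⟨hM'sub.trans hmC, hM'ne, hM'cl, hM'inv⟩ hM'sub)⟩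

/-- A translate of an `N`-minimal set is `N`-minimal, for `N` normal. -/
lemma minFor_image (hcont : ∀ g : G, Continuous (ρ g)) {N : Subgroup G} [hN : N.Normal]
    {M : Set 𝕊} (hM : MinFor ρ N M) (g : G) : MinFor ρ N (ρ g '' M) := by
  obtain ⟨hne, hcl, hinvM, hminM⟩ := hM
  refine ⟨hne.image _, isClosed_image ρ hcont hcl g, ?_, ?_⟩
  · intro n hn
    rw [← image_mul, show n * g = g * (g⁻¹ * n * g) by group, image_mul,
      hinvM _ (hN.conj_mem' n hn g)]
  · intro M' hsub hne' hcl' hinv'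
    have h1 : ρ g⁻¹ '' M' ⊆ M := by
      have := Set.image_mono (f := ρ g⁻¹) hsub
      rwa [image_inv_image] at this
    have h2 : ∀ n ∈ N, ρ n '' (ρ g⁻¹ '' M') = ρ g⁻¹ '' M' := by
      intro n hn
      rw [← image_mul, show n * g⁻¹ = g⁻¹ * (g * n * g⁻¹) by group, image_mul,
        hinv' _ (hN.conj_mem n hn g)]
    have h3 := hminM _ h1 (hne'.image _) (isClosed_image ρ hcont hcl' g⁻¹) h2
    rw [← h3, image_image_inv]

/-- Two `N`-minimal sets are equal or disjoint. -/
lemma minFor_eq_or_disjoint {N : Subgroup G} {M₁ M₂ : Set 𝕊}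
    (h₁ : MinFor ρ N M₁) (h₂ : MinFor ρ N M₂) : M₁ = M₂ ∨ Disjoint M₁ M₂ := by
  rcases Set.eq_empty_or_nonempty (M₁ ∩ M₂) with he | hne
  · exact Or.inr (Set.disjoint_iff_inter_eq_empty.mpr he)
  · left
    have hinv : ∀ n ∈ N, ρ n '' (M₁ ∩ M₂) = M₁ ∩ M₂ := fun n hn => by
      rw [Set.image_inter (ρ n).injective, h₁.2.2.1 n hn, h₂.2.2.1 n hn]
    have e1 := h₁.2.2.2 _ Set.inter_subset_left hne (h₁.2.1.inter h₂.2.1) hinv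
    have e2 := h₂.2.2.2 _ Set.inter_subset_right hne (h₁.2.1.inter h₂.2.1) hinv
    exact e1.symm.trans e2

/-- The engine: a finite equivariant family of nonempty closed pairwise equal-or-disjoint
sets, one of which is contained in the infinite minimal set `Λ`, cannot have a point of
its union outside that distinguished piece. -/
lemma engine (hcont : ∀ g : G, Continuous (ρ g)) (hor : ∀ g : G, OrientationPreserving (ρ g))
    (Λ : Set 𝕊) (hΛ : IsMinimalInvariant ρ Λ) (hinf : Λ.Infinite)
    {ι : Type*} [Finite ι] (S : ι → Set 𝕊)
    (hSne : ∀ i, (S i).Nonempty) (hScl : ∀ i, IsClosed (S i))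
    (hdisj : ∀ i j, S i = S j ∨ Disjoint (S i) (S j))
    (hequiv : ∀ (g : G) i, ∃ j, ρ g '' S i = S j)
    (i₀ : ι) (hi₀ : S i₀ ⊆ Λ)
    (y₀ : 𝕊) (hy₀ : y₀ ∈ ⋃ i, S i) (hy₀' : y₀ ∉ S i₀) : False := by
  classical
  obtain ⟨hΛne, hΛcl, hΛinv, hΛmin⟩ := hΛ
  -- the union of the pieces
  set K : Set 𝕊 := ⋃ i, S i with hK
  have hKcl : IsClosed K := isClosed_iUnion_of_finite hScl
  have hKinv : ∀ g : G, ρ g '' K = K := by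
    refine invariant_of_subset ρ fun g => ?_
    rintro x ⟨y, hy, rfl⟩
    obtain ⟨i, hi⟩ := Set.mem_iUnion.1 hy
    obtain ⟨j, hj⟩ := hequiv g i
    exact Set.mem_iUnion.2 ⟨j, hj ▸ ⟨y, hi, rfl⟩⟩
  set L : Set ℝ := {x : ℝ | (x : 𝕊) ∈ K} with hLdef
  have hLper : ∀ (x : ℝ) (n : ℤ), (x + n) ∈ L ↔ x ∈ L := by
    intro x n; simp only [hLdef, Set.mem_setOf_eq, coe_int_add]
  -- same-piece relation
  set SP : 𝕊 → 𝕊 → Prop := fun z w => ∃ i, z ∈ S i ∧ w ∈ S i with hSPdef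
  -- a piece different from the distinguished one
  obtain ⟨j₀, hj₀K⟩ := Set.mem_iUnion.1 hy₀
  have hj₀ : S j₀ ≠ S i₀ := fun h => hy₀' (h ▸ hj₀K)
  -- uniform separation between different pieces
  obtain ⟨δ, hδpos, hδ⟩ : ∃ δ, 0 < δ ∧ ∀ z ∈ K, ∀ w ∈ K, ¬ SP z w → δ ≤ dist z w := by
    set D : Set (𝕊 × 𝕊) := ⋃ p : ι × ι, (if S p.1 ≠ S p.2 then S p.1 ×ˢ S p.2 else ∅)
      with hD
    have hDcl : IsClosed D := by
      refine isClosed_iUnion_of_finite fun p => ?_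
      split_ifs
      · exact (hScl p.1).prod (hScl p.2)
      · exact isClosed_empty
    have hDne : D.Nonempty := by
      obtain ⟨z, hz⟩ := hSne j₀
      obtain ⟨w, hw⟩ := hSne i₀
      exact ⟨(z, w), Set.mem_iUnion.2 ⟨(j₀, i₀), by rw [if_pos hj₀]; exact Set.mk_mem_prod hz hw⟩⟩
    obtain ⟨p₀, hp₀D, hp₀min⟩ := hDcl.isCompact.exists_isMinOn hDne
      continuous_dist.continuousOn
    have hpos : (0 : ℝ) < dist p₀.1 p₀.2 := by
      obtain ⟨p, hp⟩ := Set.mem_iUnion.1 hp₀D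
      by_cases hne : S p.1 ≠ S p.2
      · rw [if_pos hne] at hp
        rcases hdisj p.1 p.2 with h | h
        · exact absurd h hne
        · refine dist_pos.2 fun he => ?_
          exact Set.disjoint_left.1 h hp.1 (he ▸ hp.2)
      · rw [if_neg hne] at hp; exact absurd hp (Set.notMem_empty _)
    refine ⟨dist p₀.1 p₀.2, hpos, ?_⟩
    intro z hz w hw hnsp
    obtain ⟨i, hi⟩ := Set.mem_iUnion.1 hz
    obtain ⟨j, hj⟩ := Set.mem_iUnion.1 hw
    have hij : S i ≠ S j := fun h => hnsp ⟨j, h ▸ hi, hj⟩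
    exact isMinOn_iff.1 hp₀min (z, w) (Set.mem_iUnion.2 ⟨(i, j), by rw [if_pos hij]; exact Set.mk_mem_prod hi hj⟩)
  -- mixed gaps
  set MG : ℝ → ℝ → Prop := fun a b =>
    (a ∈ L ∧ b ∈ L ∧ a < b ∧ ∀ s ∈ Set.Ioo a b, s ∉ L) ∧ ¬ SP (a : 𝕊) (b : 𝕊) with hMG
  -- width of mixed gaps
  have hwidth : ∀ a b, MG a b → δ ≤ b - a := by
    rintro a b ⟨⟨haL, hbL, hab, _⟩, hnsp⟩
    have h1 : δ ≤ dist (a : 𝕊) (b : 𝕊) := hδ _ haL _ hbL hnsp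
    have h2 : dist (a : 𝕊) (b : 𝕊) ≤ |a - b| := dist_coe_le a b
    rw [abs_sub_comm, abs_of_pos (by linarith : (0:ℝ) < b - a)] at h2
    linarith
  -- integer translates of mixed gaps
  have htrans : ∀ a b (n : ℤ), MG a b → MG (a + n) (b + n) := by
    rintro a b n ⟨⟨haL, hbL, hab, hioo⟩, hnsp⟩
    refine ⟨⟨(hLper a n).2 haL, (hLper b n).2 hbL, by linarith, ?_⟩, ?_⟩
    · intro s hs hsL
      refine hioo (s - n) ⟨by linarith [hs.1], by linarith [hs.2]⟩
        ((hLper (s - n) n).1 (by simpa using hsL))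
    · simpa only [coe_int_add] using hnsp
  -- group elements map mixed gaps to mixed gaps
  have hmap : ∀ (g : G) a b, MG a b →
      ∃ a' b', MG a' b' ∧ (a' : 𝕊) = ρ g (a : 𝕊) ∧ (b' : 𝕊) = ρ g (b : 𝕊) := by
    rintro g a b ⟨⟨haL, hbL, hab, hioo⟩, hnsp⟩
    obtain ⟨F, hFmono, hFsurj, hFper, hFcoe⟩ := hor g
    have hmemF : ∀ x : ℝ, F x ∈ L ↔ x ∈ L := by
      intro x
      show ((F x : ℝ) : 𝕊) ∈ K ↔ ((x : ℝ) : 𝕊) ∈ K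
      rw [← hFcoe, mem_invariant_iff ρ (hKinv g)]
    refine ⟨F a, F b, ⟨⟨(hmemF a).2 haL, (hmemF b).2 hbL, hFmono hab, ?_⟩, ?_⟩,
      (hFcoe a).symm, (hFcoe b).symm⟩
    · intro s hs hsL
      obtain ⟨u, rfl⟩ := hFsurj s
      exact hioo u ⟨hFmono.lt_iff_lt.1 hs.1, hFmono.lt_iff_lt.1 hs.2⟩ ((hmemF u).1 hsL)
    · rintro ⟨i, hFa, hFb⟩
      obtain ⟨j, hj⟩ := hequiv g⁻¹ i
      refine hnsp ⟨j, ?_, ?_⟩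
      · have h1 : ρ g⁻¹ ((F a : ℝ) : 𝕊) ∈ S j := hj ▸ ⟨_, hFa, rfl⟩
        rwa [← hFcoe, inv_apply_apply] at h1
      · have h1 : ρ g⁻¹ ((F b : ℝ) : 𝕊) ∈ S j := hj ▸ ⟨_, hFb, rfl⟩
        rwa [← hFcoe, inv_apply_apply] at h1
  -- existence of a mixed gap with left endpoint in Λ
  obtain ⟨a₀, b₀, hmg₀, ha₀Λ⟩ : ∃ a b, MG a b ∧ (a : 𝕊) ∈ Λ := by
    obtain ⟨x₀, hx₀⟩ := hSne i₀
    obtain ⟨xt, hxt⟩ := coe_surj x₀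
    obtain ⟨yh, hyh⟩ := coe_surj y₀
    set yt : ℝ := yh + ((⌊xt - yh⌋ + 1 : ℤ) : ℝ) with hytdef
    have hyt𝕊 : (yt : 𝕊) = y₀ := by rw [hytdef, coe_int_add, hyh]
    have hxy : xt < yt := by
      have h := Int.lt_floor_add_one (xt - yh)
      rw [hytdef]
      push_cast
      linarith
    set Koth : Set 𝕊 := ⋃ i, (if S i ≠ S i₀ then S i else ∅) with hKoth
    have hKothcl : IsClosed Koth := by
      refine isClosed_iUnion_of_finite fun i => ?_
      split_ifs
      exacts [hScl i, isClosed_empty]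
    have hdisK : ∀ z, z ∈ S i₀ → z ∉ Koth := by
      intro z hz hzo
      obtain ⟨i, hi⟩ := Set.mem_iUnion.1 hzo
      by_cases hne : S i ≠ S i₀
      · rw [if_pos hne] at hi
        rcases hdisj i i₀ with h | h
        · exact hne h
        · exact Set.disjoint_left.1 h hi hz
      · rw [if_neg hne] at hi; exact hi
    have hKsplit : ∀ z, z ∈ K → z ∉ Koth → z ∈ S i₀ := by
      intro z hz hzo
      obtain ⟨i, hi⟩ := Set.mem_iUnion.1 hz
      by_cases hne : S i ≠ S i₀
      · exact absurd (Set.mem_iUnion.2 ⟨i, by rw [if_pos hne]; exact hi⟩) hzo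
      · push_neg at hne; exact hne ▸ hi
    have hKothK : ∀ z, z ∈ Koth → z ∈ K := by
      intro z hz
      obtain ⟨i, hi⟩ := Set.mem_iUnion.1 hz
      by_cases hne : S i ≠ S i₀
      · rw [if_pos hne] at hi; exact Set.mem_iUnion.2 ⟨i, hi⟩
      · rw [if_neg hne] at hi; exact absurd hi (Set.notMem_empty _)
    have hy₀oth : y₀ ∈ Koth := Set.mem_iUnion.2 ⟨j₀, by rw [if_pos hj₀]; exact hj₀K⟩
    set A : Set ℝ := Set.Icc xt yt ∩ ((↑) : ℝ → 𝕊) ⁻¹' Koth with hA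
    have hAcl : IsClosed A := isClosed_Icc.inter (hKothcl.preimage continuous_coe)
    have hAne : A.Nonempty := ⟨yt, ⟨hxy.le, le_rfl⟩, by
      simp only [Set.mem_preimage, hyt𝕊]; exact hy₀oth⟩
    have hAbdd : BddBelow A := ⟨xt, fun s hs => hs.1.1⟩
    set t := sInf A with htdef
    have htA : t ∈ A := hAcl.csInf_mem hAne hAbdd
    have hxt_t : xt < t := by
      rcases eq_or_lt_of_le htA.1.1 with he | h
      · exfalso
        apply hdisK x₀ hx₀
        rw [← hxt, he]
        exact htA.2
      · exact h
    set B : Set ℝ := Set.Icc xt t ∩ ((↑) : ℝ → 𝕊) ⁻¹' (S i₀) with hB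
    have hBcl : IsClosed B := isClosed_Icc.inter ((hScl i₀).preimage continuous_coe)
    have hBne : B.Nonempty := ⟨xt, ⟨le_rfl, hxt_t.le⟩, by
      simp only [Set.mem_preimage, hxt]; exact hx₀⟩
    have hBbdd : BddAbove B := ⟨t, fun s hs => hs.1.2⟩
    set a := sSup B with haDef
    have haB : a ∈ B := hBcl.csSup_mem hBne hBbdd
    have ha_t : a < t := by
      rcases eq_or_lt_of_le haB.1.2 with he | h
      · exact absurd htA.2 (he ▸ hdisK _ haB.2)
      · exact h
    refine ⟨a, t, ⟨⟨?_, ?_, ha_t, ?_⟩, ?_⟩, hi₀ haB.2⟩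
    · exact Set.mem_iUnion.2 ⟨i₀, haB.2⟩
    · exact hKothK _ htA.2
    · intro s hs hsL
      by_cases hso : (s : 𝕊) ∈ Koth
      · have hsA : s ∈ A := ⟨⟨haB.1.1.trans hs.1.le, hs.2.le.trans htA.1.2⟩, hso⟩
        exact absurd (csInf_le hAbdd hsA) (not_le.2 hs.2)
      · have hsB : s ∈ B := ⟨⟨haB.1.1.trans hs.1.le, hs.2.le⟩, hKsplit _ hsL hso⟩
        exact absurd (le_csSup hBbdd hsB) (not_le.2 hs.1)
    · rintro ⟨i, hai, hti⟩
      rcases hdisj i i₀ with h | h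
      · exact hdisK _ (h ▸ hti) htA.2
      · exact Set.disjoint_left.1 h hai haB.2
  -- the set of endpoints of mixed gaps is finite
  set E : Set 𝕊 := {z | ∃ a b, MG a b ∧ ((a : 𝕊) = z ∨ (b : 𝕊) = z)} with hE
  have hEfin : E.Finite := by
    set EL : Set ℝ := {x | x ∈ Set.Ico (0:ℝ) 1 ∧ ∃ b, MG x b} with hEL
    set ER : Set ℝ := {x | x ∈ Set.Ico (0:ℝ) 1 ∧ ∃ a, MG a x} with hER
    have hELfin : EL.Finite := by
      refine sep_finite hδpos (fun x hx => hx.1) ?_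
      rintro x ⟨_, bx, hgx⟩ y ⟨_, by', hgy⟩ hxy
      have h1 : δ ≤ bx - x := hwidth _ _ hgx
      have h2 : ¬ (y ∈ Set.Ioo x bx) := fun hm => hgx.1.2.2.2 y hm hgy.1.1
      simp only [Set.mem_Ioo, not_and, not_lt] at h2
      have h3 := h2 hxy
      linarith
    have hERfin : ER.Finite := by
      refine sep_finite hδpos (fun x hx => hx.1) ?_
      rintro x ⟨_, ax, hgx⟩ y ⟨_, ay, hgy⟩ hxy
      have h1 : δ ≤ y - ay := hwidth _ _ hgy
      have h2 : ¬ (x ∈ Set.Ioo ay y) := fun hm => hgy.1.2.2.2 x hm hgx.1.2.1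
      simp only [Set.mem_Ioo, not_and, not_lt] at h2
      by_cases h3 : ay < x
      · have h4 := h2 h3; linarith
      · push_neg at h3; linarith
    refine ((hELfin.image ((↑) : ℝ → 𝕊)).union (hERfin.image ((↑) : ℝ → 𝕊))).subset ?_
    rintro z ⟨a, b, hg, hz | hz⟩
    · left
      refine ⟨a + ((-⌊a⌋ : ℤ) : ℝ), ⟨⟨?_, ?_⟩, b + ((-⌊a⌋ : ℤ) : ℝ),
        htrans a b _ hg⟩, ?_⟩
      · push_cast; linarith [Int.floor_le a]
      · push_cast; linarith [Int.lt_floor_add_one a]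
      · rw [coe_int_add, hz]
    · right
      refine ⟨b + ((-⌊b⌋ : ℤ) : ℝ), ⟨⟨?_, ?_⟩, a + ((-⌊b⌋ : ℤ) : ℝ),
        htrans a b _ hg⟩, ?_⟩
      · push_cast; linarith [Int.floor_le b]
      · push_cast; linarith [Int.lt_floor_add_one b]
      · rw [coe_int_add, hz]
  -- E is invariant
  have hEinv : ∀ g : G, ρ g '' E = E := by
    refine invariant_of_subset ρ fun g => ?_
    rintro _ ⟨w, ⟨a, b, hg, hw⟩, rfl⟩
    obtain ⟨a', b', hg', ha', hb'⟩ := hmap g a b hg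
    rcases hw with rfl | rfl
    · exact ⟨a', b', hg', Or.inl ha'⟩
    · exact ⟨a', b', hg', Or.inr hb'⟩
  -- conclusion: E ∩ Λ is a finite nonempty closed invariant subset of Λ
  have hne' : (E ∩ Λ).Nonempty := ⟨(a₀ : 𝕊), ⟨a₀, b₀, hmg₀, Or.inl rfl⟩, ha₀Λ⟩
  have hinv' : ∀ g : G, ρ g '' (E ∩ Λ) = E ∩ Λ := fun g => by
    rw [Set.image_inter (ρ g).injective, hEinv g, hΛinv g]
  have heq := hΛmin _ Set.inter_subset_right hne' ((hEfin.inter_of_left Λ).isClosed) hinv'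
  have hΛE : Λ ⊆ E := by
    intro z hz
    have hz' : z ∈ E ∩ Λ := heq.symm ▸ hz
    exact hz'.1
  exact hinf (hEfin.subset hΛE)

end CMAux

open CMAux in
/-- If a group of (orientation-preserving) circle homeomorphisms has an infinite minimal
invariant set `Λ`, then `Λ` is also the unique minimal invariant set for any finite-index
subgroup `H`; in particular `Λ` is `H`-invariant and the `H`-action on `Λ` is minimal. -/
theorem minimal_of_finiteIndex_subgroup {G : Type*} [Group G] (ρ : G →* Equiv.Perm 𝕊)
    (hcont : ∀ g : G, Continuous (ρ g))
    (hor : ∀ g : G, OrientationPreserving (ρ g))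
    (Λ : Set 𝕊) (hΛ : IsMinimalInvariant ρ Λ) (hinf : Λ.Infinite)
    (H : Subgroup G) [H.FiniteIndex] :
    IsMinimalInvariant (ρ.comp H.subtype) Λ ∧
      ∀ Λ' : Set 𝕊, IsMinimalInvariant (ρ.comp H.subtype) Λ' → Λ' = Λ := by
  classical
  obtain ⟨hΛne, hΛcl, hΛinv, hΛmin⟩ := hΛ
  set N : Subgroup G := H.normalCore with hNdef
  haveI hNnormal : N.Normal := H.normalCore_normal
  have hNH : N ≤ H := H.normalCore_le
  haveI : N.FiniteIndex := H.finiteIndex_normalCore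
  haveI : Finite (G ⧸ N) := inferInstance
  -- key identity: translating by any element of a coset gives the same translate
  have keyT : ∀ (M : Set 𝕊), (∀ n ∈ N, ρ n '' M = M) → ∀ x : G,
      ρ x '' M = ρ (Quotient.out ((x : G ⧸ N))) '' M := by
    intro M hMinv x
    have ho : ((Quotient.out ((x : G ⧸ N)) : G) : G ⧸ N) = (x : G ⧸ N) :=
      Quotient.out_eq' _
    have hmem : (Quotient.out ((x : G ⧸ N)))⁻¹ * x ∈ N := (QuotientGroup.eq).1 ho
    calc ρ x '' M
        = ρ (Quotient.out ((x : G ⧸ N)) * ((Quotient.out ((x : G ⧸ N)))⁻¹ * x)) '' M := by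
          rw [mul_inv_cancel_left]
      _ = ρ (Quotient.out ((x : G ⧸ N))) '' (ρ ((Quotient.out ((x : G ⧸ N)))⁻¹ * x) '' M) :=
          image_mul ρ _ _ M
      _ = ρ (Quotient.out ((x : G ⧸ N))) '' M := by rw [hMinv _ hmem]
  have hout1 : (Quotient.out ((1 : G ⧸ N))) ∈ N := by
    have ho : ((Quotient.out ((1 : G ⧸ N)) : G) : G ⧸ N) = (1 : G ⧸ N) :=
      Quotient.out_eq' _
    exact (QuotientGroup.eq_one_iff _).1 ho
  -- Step 1: Λ is N-minimal
  have step1 : ∀ Λ'' : Set 𝕊, Λ'' ⊆ Λ → Λ''.Nonempty → IsClosed Λ'' →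
      (∀ n ∈ N, ρ n '' Λ'' = Λ'') → Λ'' = Λ := by
    intro Λ'' hsub hne hcl hinvN
    obtain ⟨M, hMsub, hMmin⟩ := exists_minFor ρ hcont N Λ'' hne hcl hinvN
    set S : G ⧸ N → Set 𝕊 := fun q => ρ (Quotient.out q) '' M with hSdef
    have hSne : ∀ q, (S q).Nonempty := fun q => hMmin.1.image _
    have hScl : ∀ q, IsClosed (S q) := fun q => isClosed_image ρ hcont hMmin.2.1 _
    have hSminF : ∀ q, MinFor ρ N (S q) := fun q => minFor_image ρ hcont hMmin _
    have hSdisj : ∀ q q', S q = S q' ∨ Disjoint (S q) (S q') := fun q q' =>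
      minFor_eq_or_disjoint ρ (hSminF q) (hSminF q')
    have hSeq : ∀ (g : G) q, ρ g '' S q = S ((g * Quotient.out q : G) : G ⧸ N) := by
      intro g q
      rw [hSdef]
      simp only
      rw [← image_mul]
      exact keyT M hMmin.2.2.1 _
    have hSequiv : ∀ (g : G) q, ∃ q', ρ g '' S q = S q' := fun g q => ⟨_, hSeq g q⟩
    have hM1 : ρ (Quotient.out ((1 : G ⧸ N))) '' M = M := hMmin.2.2.1 _ hout1
    have hUsub : (⋃ q, S q) ⊆ Λ := by
      rintro z hz
      obtain ⟨q, w, hw, rfl⟩ := Set.mem_iUnion.1 hz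
      rw [← hΛinv (Quotient.out q)]
      exact ⟨w, hsub (hMsub hw), rfl⟩
    have hUne : (⋃ q, S q).Nonempty := by
      obtain ⟨w, hw⟩ := hSne (1 : G ⧸ N)
      exact ⟨w, Set.mem_iUnion.2 ⟨_, hw⟩⟩
    have hUinv : ∀ g : G, ρ g '' (⋃ q, S q) = ⋃ q, S q := by
      refine invariant_of_subset ρ fun g => ?_
      rintro z ⟨w, hw, rfl⟩
      obtain ⟨q, hq⟩ := Set.mem_iUnion.1 hw
      refine Set.mem_iUnion.2 ⟨((g * Quotient.out q : G) : G ⧸ N), ?_⟩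
      rw [← hSeq g q]
      exact ⟨w, hq, rfl⟩
    have hUeq : (⋃ q, S q) = Λ :=
      hΛmin _ hUsub hUne (isClosed_iUnion_of_finite hScl) hUinv
    have hMΛ : M = Λ := by
      by_contra hne'
      obtain ⟨y₀, hy₀Λ, hy₀M⟩ :=
        Set.exists_of_ssubset (lt_of_le_of_ne (hMsub.trans hsub) hne')
      refine engine ρ hcont hor Λ ⟨hΛne, hΛcl, hΛinv, hΛmin⟩ hinf S hSne hScl hSdisj
        hSequiv (1 : G ⧸ N) ?_ y₀ ?_ ?_
      · show ρ (Quotient.out ((1 : G ⧸ N))) '' M ⊆ Λ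
        rw [hM1]; exact hMsub.trans hsub
      · rw [hUeq]; exact hy₀Λ
      · show y₀ ∉ ρ (Quotient.out ((1 : G ⧸ N))) '' M
        rw [hM1]; exact hy₀M
    exact le_antisymm hsub (by rw [← hMΛ]; exact hMsub)
  -- Part 1
  have part1 : IsMinimalInvariant (ρ.comp H.subtype) Λ := by
    refine ⟨hΛne, hΛcl, fun h => hΛinv (h : G), ?_⟩
    intro Λ' hsub hne hcl hinvH
    exact step1 Λ' hsub hne hcl fun n hn => hinvH ⟨n, hNH hn⟩
  refine ⟨part1, ?_⟩
  -- Part 2: uniqueness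
  intro Λ' hΛ'
  obtain ⟨hne', hcl', hinv', hmin'⟩ := hΛ'
  obtain ⟨M', hM'sub, hM'min⟩ := exists_minFor ρ hcont N Λ' hne' hcl'
    (fun n hn => hinv' ⟨n, hNH hn⟩)
  have htransMin : ∀ q : G ⧸ N, MinFor ρ N (ρ (Quotient.out q) '' M') := fun q =>
    minFor_image ρ hcont hM'min _
  have hΛdisj : ∀ q : G ⧸ N, ρ (Quotient.out q) '' M' = Λ ∨
      Disjoint Λ (ρ (Quotient.out q) '' M') := by
    intro q
    rcases Set.eq_empty_or_nonempty (Λ ∩ ρ (Quotient.out q) '' M') with he | hne2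
    · exact Or.inr (Set.disjoint_iff_inter_eq_empty.mpr he)
    · left
      have hinvT : ∀ n ∈ N, ρ n '' (Λ ∩ ρ (Quotient.out q) '' M') =
          Λ ∩ ρ (Quotient.out q) '' M' := fun n hn => by
        rw [Set.image_inter (ρ n).injective, hΛinv n, (htransMin q).2.2.1 n hn]
      have heqT := (htransMin q).2.2.2 _ Set.inter_subset_right hne2
        (hΛcl.inter (htransMin q).2.1) hinvT
      have hTsub : ρ (Quotient.out q) '' M' ⊆ Λ := by
        rw [← heqT]; exact Set.inter_subset_left
      exact step1 _ hTsub (htransMin q).1 (htransMin q).2.1 (htransMin q).2.2.1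
  have hM'1 : ρ (Quotient.out ((1 : G ⧸ N))) '' M' = M' := hM'min.2.2.1 _ hout1
  have hexq : ∃ q : G ⧸ N, ρ (Quotient.out q) '' M' = Λ := by
    by_contra hnone
    push_neg at hnone
    haveI : Finite (Option (G ⧸ N)) :=
      Finite.of_equiv _ (Equiv.optionEquivSumPUnit.{0,_} (G ⧸ N)).symm
    set S : Option (G ⧸ N) → Set 𝕊 :=
      fun o => o.elim Λ (fun q => ρ (Quotient.out q) '' M') with hSdef
    have hSne : ∀ o, (S o).Nonempty := by
      rintro (_ | q)
      · exact hΛne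
      · exact hM'min.1.image _
    have hScl : ∀ o, IsClosed (S o) := by
      rintro (_ | q)
      · exact hΛcl
      · exact isClosed_image ρ hcont hM'min.2.1 _
    have hSdisj : ∀ o o', S o = S o' ∨ Disjoint (S o) (S o') := by
      rintro (_ | q) (_ | q')
      · exact Or.inl rfl
      · rcases hΛdisj q' with h | h
        · exact Or.inl h.symm
        · exact Or.inr h
      · rcases hΛdisj q with h | h
        · exact Or.inl h
        · exact Or.inr h.symm
      · exact minFor_eq_or_disjoint ρ (htransMin q) (htransMin q')
    have hSequiv : ∀ (g : G) o, ∃ o', ρ g '' S o = S o' := by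
      rintro g (_ | q)
      · exact ⟨none, hΛinv g⟩
      · refine ⟨some ((g * Quotient.out q : G) : G ⧸ N), ?_⟩
        show ρ g '' (ρ (Quotient.out q) '' M') = _
        rw [← image_mul]
        exact keyT M' hM'min.2.2.1 _
    obtain ⟨w, hw⟩ := hM'min.1
    have hw1 : w ∈ S (some (1 : G ⧸ N)) := by
      show w ∈ ρ (Quotient.out ((1 : G ⧸ N))) '' M'
      rw [hM'1]; exact hw
    have hwΛ : w ∉ Λ := by
      intro hc
      have hd := (hΛdisj (1 : G ⧸ N)).resolve_left (hnone _)
      rw [hM'1] at hd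
      exact Set.disjoint_left.1 hd hc hw
    refine engine ρ hcont hor Λ ⟨hΛne, hΛcl, hΛinv, hΛmin⟩ hinf S hSne hScl hSdisj
      hSequiv none ?_ w ?_ ?_
    · show Λ ⊆ Λ
      exact subset_rfl
    · exact Set.mem_iUnion.2 ⟨some (1 : G ⧸ N), hw1⟩
    · show w ∉ Λ
      exact hwΛ
  obtain ⟨q, hq⟩ := hexq
  have hM'Λ : M' = Λ := by
    have h1 : ρ (Quotient.out q)⁻¹ '' (ρ (Quotient.out q) '' M') =
        ρ (Quotient.out q)⁻¹ '' Λ := by rw [hq]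
    rw [image_inv_image, hΛinv] at h1
    exact h1
  have hΛsub : Λ ⊆ Λ' := by rw [← hM'Λ]; exact hM'sub
  exact (hmin' Λ hΛsub hΛne hΛcl fun h => hΛinv (h : G)).symm
end
end

section
/- Let G₁, G₂ be groups with a common subgroup A, and let G = G₁ *_A G₂ be their amalgamated free product, with G₁ ≠ A and G₂ ≠ A. Suppose G acts on a set Ω containing disjoint nonempty subsets X₁, X₂, and subsets X₁^e ⊆ X₁, X₂^ē ⊆ X₂, such that: A·X₁^e ⊆ X₁^e and A·X₂^ē ⊆ X₂^ē; (G₁ \ A)·X₂ ⊆ X₁^e and (G₂ \ A)·X₁ ⊆ X₂^ē; the actions of A restricted to X₁^e and to X₂^ē are both faithful; and at least one of the inclusions (G₁ \ A)·X₂ ⊆ X₁ or (G₂ \ A)·X₁ ⊆ X₂ is proper. Then the action of G on Ω is faithful. -/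
/-!
Every element of `G₁ *_A G₂` either lies in `A` or is a reduced product `g₁ ⋯ gₙ` of
elements `gₖ ∉ A` taken alternately from `G₁` and `G₂`. An element of `A` acting trivially
is `1` by faithfulness of `A` on `X₁ᵉ`. A reduced product plays ping-pong: it maps the
`X` of the factor not containing `gₙ` into the `X` of the factor containing `g₁`. If `g₁`
and `gₙ` lie in the same factor, it therefore moves every point of the other, disjoint, `X`.
Otherwise, after inverting if necessary, `g₁` lies in the factor `Gₘ` for which
`(Gₘ \ A)·X ⊆ Xₘ` is proper, and a point `x ∈ Xₘ` outside `(Gₘ \ A)·X` is moved, since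
`(g₁ ⋯ gₙ)·x = g₁·(g₂ ⋯ gₙ·x)` lies in `(Gₘ \ A)·X`.
-/

namespace Monoid.PushoutI

variable {ι H : Type*} {G : ι → Type*} [Group H] [∀ i, Group (G i)] {φ : ∀ i, H →* G i}

variable (φ) in
inductive IsReducedProd : ι → ι → PushoutI φ → Prop
  | of {i : ι} {g : G i} (hg : g ∉ (φ i).range) : IsReducedProd i i (of i g)
  | of_mul {i j k : ι} {g : G i} {w : PushoutI φ} (hg : g ∉ (φ i).range) (hij : i ≠ j)
      (hw : IsReducedProd j k w) : IsReducedProd i k (of i g * w)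

namespace IsReducedProd

variable {i j k : ι} {w : PushoutI φ}

theorem base_mul (h : H) (hw : IsReducedProd φ i j w) :
    IsReducedProd φ i j (base φ h * w) := by
  have hh : φ i h ∈ (φ i).range := ⟨h, rfl⟩
  cases hw with
  | of hg =>
    rw [← of_apply_eq_base φ i h, ← map_mul]
    exact .of (((φ i).range.mul_mem_cancel_left hh).not.mpr hg)
  | of_mul hg hij hw =>
    rw [← mul_assoc, ← of_apply_eq_base φ i h, ← map_mul]
    exact .of_mul (((φ i).range.mul_mem_cancel_left hh).not.mpr hg) hij hw

theorem mul_of {g : G k} (hw : IsReducedProd φ i j w) (hg : g ∉ (φ k).range) (hjk : j ≠ k) :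
    IsReducedProd φ i k (w * PushoutI.of k g) := by
  induction hw with
  | of hg' => exact .of_mul hg' hjk (.of hg)
  | of_mul hg' hij _ ih =>
    rw [mul_assoc]
    exact .of_mul hg' hij (ih hjk)

theorem inv (hw : IsReducedProd φ i j w) : IsReducedProd φ j i w⁻¹ := by
  induction hw with
  | of hg =>
    rw [← map_inv]
    exact .of (((φ _).range.inv_mem_iff).not.mpr hg)
  | of_mul hg hij _ ih =>
    rw [mul_inv_rev, ← map_inv]
    exact ih.mul_of (((φ _).range.inv_mem_iff).not.mpr hg) hij.symm

end IsReducedProd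

theorem NormalWord.prod_mem_range_base_or_isReducedProd [DecidableEq ι]
    [∀ i, DecidableEq (G i)] {d : NormalWord.Transversal φ} (v : NormalWord d) :
    v.prod ∈ (base φ).range ∨ ∃ i j, v.fstIdx = some i ∧ IsReducedProd φ i j v.prod := by
  induction v using NormalWord.consRecOn with
  | empty => exact .inl ⟨1, by simp⟩
  | cons i g v hmw _ hgr _ ih =>
    have hfst : (NormalWord.cons g v hmw hgr).fstIdx = some i := by
      simp [NormalWord.cons, CoprodI.Word.fstIdx, CoprodI.Word.cons]
    rw [NormalWord.prod_cons]
    rcases ih with ⟨h, hh⟩ | ⟨i', j, hfst', hv⟩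
    · refine .inr ⟨i, i, hfst, ?_⟩
      rw [← hh, ← of_apply_eq_base φ i h, ← map_mul]
      have hφh : φ i h ∈ (φ i).range := ⟨h, rfl⟩
      exact .of (((φ i).range.mul_mem_cancel_right hφh).not.mpr hgr)
    · exact .inr ⟨i, j, hfst, .of_mul hgr (fun h => hmw (h ▸ hfst')) hv⟩
  | base h v _ ih =>
    rw [NormalWord.prod_smul]
    rcases ih with ⟨h', hh'⟩ | ⟨i, j, hfst, hv⟩
    · exact .inl ⟨h * h', by rw [map_mul, hh']⟩
    · exact .inr ⟨i, j, hfst, hv.base_mul h⟩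

theorem mem_range_base_or_isReducedProd (hφ : ∀ i, Function.Injective (φ i))
    (w : PushoutI φ) : w ∈ (base φ).range ∨ ∃ i j, IsReducedProd φ i j w := by
  classical
  obtain ⟨d⟩ := NormalWord.transversal_nonempty φ hφ
  have hw : (w • NormalWord.empty (d := d)).prod = w := by
    rw [NormalWord.prod_smul, NormalWord.prod_empty, mul_one]
  rw [← hw]
  exact (NormalWord.prod_mem_range_base_or_isReducedProd _).imp_right
    fun ⟨i, j, _, h⟩ => ⟨i, j, h⟩

namespace IsReducedProd

variable {Ω : Type*} [MulAction (PushoutI φ) Ω] {X : ι → Set Ω} {i j k : ι}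
  {w : PushoutI φ} {x : Ω}

theorem smul_mem (hpp : ∀ i j, i ≠ j → ∀ g ∉ (φ i).range, ∀ x ∈ X j,
      PushoutI.of (φ := φ) i g • x ∈ X i)
    (hw : IsReducedProd φ i j w) (hkj : k ≠ j) (hx : x ∈ X k) : w • x ∈ X i := by
  induction hw with
  | of hg => exact hpp _ _ hkj.symm _ hg x hx
  | of_mul hg hij _ ih =>
    rw [mul_smul]
    exact hpp _ _ hij _ hg _ (ih hkj)

theorem smul_ne_self (hpp : ∀ i j, i ≠ j → ∀ g ∉ (φ i).range, ∀ x ∈ X j,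
      PushoutI.of (φ := φ) i g • x ∈ X i)
    (hw : IsReducedProd φ i j w) (hij : i ≠ j) (hx : x ∈ X i)
    (hmiss : ∀ g ∉ (φ i).range, ∀ k ≠ i, ∀ z ∈ X k,
      PushoutI.of (φ := φ) i g • z ≠ x) :
    w • x ≠ x := by
  cases hw with
  | of => exact absurd rfl hij
  | of_mul hg hik hw =>
    rw [mul_smul]
    exact hmiss _ hg _ hik.symm _ (hw.smul_mem hpp hij hx)

end IsReducedProd

end Monoid.PushoutI

open Monoid.PushoutI in
theorem pingPong_amalgamated_general {A : Type*} [Group A] (Gi : Bool → Type*)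
    [∀ i, Group (Gi i)] (φ : ∀ i, A →* Gi i)
    (hφ : ∀ i, Function.Injective (φ i))
    {Ω : Type*} [MulAction (Monoid.PushoutI φ) Ω]
    (X Xe : Bool → Set Ω)
    (hnonempty : ∀ i, (X i).Nonempty)
    (hdisj : Disjoint (X true) (X false))
    (hXe : ∀ i, Xe i ⊆ X i)
    (hpp : ∀ (i : Bool) (g : Gi i), g ∉ Set.range (φ i) → ∀ x ∈ X (!i),
      Monoid.PushoutI.of (φ := φ) i g • x ∈ Xe i)
    (hfaith : ∀ (i : Bool) (a : A),
      (∀ x ∈ Xe i, Monoid.PushoutI.of (φ := φ) i (φ i a) • x = x) → a = 1)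
    (hmiss : ∃ i, ∃ x ∈ X i, ∀ g : Gi i, g ∉ Set.range (φ i) → ∀ z ∈ X (!i),
      Monoid.PushoutI.of (φ := φ) i g • z ≠ x) :
    ∀ w : Monoid.PushoutI φ, (∀ x : Ω, w • x = x) → w = 1 := by
  have hpp' : ∀ i j, i ≠ j → ∀ g ∉ (φ i).range, ∀ x ∈ X j, of i g • x ∈ X i :=
    fun i j hij g hg x hx => hXe i (hpp i g hg x (Bool.eq_not_of_ne hij.symm ▸ hx))
  have hdisj' : ∀ i, Disjoint (X i) (X !i) := by
    rintro (_ | _)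
    exacts [hdisj.symm, hdisj]
  obtain ⟨m, x, hx, hmiss⟩ := hmiss
  have hmiss' : ∀ g ∉ (φ m).range, ∀ k ≠ m, ∀ z ∈ X k, of m g • z ≠ x :=
    fun g hg k hk z hz => hmiss g hg z (Bool.eq_not_of_ne hk ▸ hz)
  intro w hw
  rcases mem_range_base_or_isReducedProd hφ w with ⟨a, rfl⟩ | ⟨i, j, hred⟩
  · rw [hfaith true a fun y _ => (of_apply_eq_base φ true a).symm ▸ hw y, map_one]
  exfalso
  rcases eq_or_ne i j with rfl | hij
  · obtain ⟨y, hy⟩ := hnonempty (!i)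
    exact (hdisj' i).ne_of_mem (hred.smul_mem hpp' (Bool.not_ne_self i) hy) hy (hw y)
  obtain rfl | rfl : m = i ∨ m = j := by
    revert hij; cases m <;> cases i <;> cases j <;> decide
  · exact hred.smul_ne_self hpp' hij hx hmiss' (hw x)
  · exact hred.inv.smul_ne_self hpp' hij.symm hx hmiss' (inv_smul_eq_iff.mpr (hw x).symm)

/-- **Ping-pong lemma for amalgamated products** (Maskit, VII.A.10).
Let `G = G₁ *_A G₂` (here realized as `Monoid.PushoutI φ` over the index type `Bool`,
with injective structure maps `φ i : A →* Gᵢ`, `Gᵢ ≠ A`) act on a set `Ω` containing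
disjoint nonempty subsets `X i` and subsets `Xe i ⊆ X i` such that `A` preserves each
`Xe i`, `(Gᵢ \ A)·X (¬i) ⊆ Xe i`, the restricted actions of `A` on the `Xe i` are
faithful, and at least one of the inclusions `(Gᵢ \ A)·X (¬i) ⊆ X i` is proper.
Then the action of `G` on `Ω` is faithful. -/
theorem pingPong_amalgamated {A : Type*} [Group A] (Gi : Bool → Type*)
    [∀ i, Group (Gi i)] (φ : ∀ i, A →* Gi i)
    (hφ : ∀ i, Function.Injective (φ i))
    (hne : ∀ i, Set.range (φ i) ≠ Set.univ)
    {Ω : Type*} [MulAction (Monoid.PushoutI φ) Ω]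
    (X Xe : Bool → Set Ω)
    (hnonempty : ∀ i, (X i).Nonempty)
    (hdisj : Disjoint (X true) (X false))
    (hXe : ∀ i, Xe i ⊆ X i)
    (hAinv : ∀ (i : Bool) (a : A), ∀ x ∈ Xe i,
      Monoid.PushoutI.of (φ := φ) i (φ i a) • x ∈ Xe i)
    (hpp : ∀ (i : Bool) (g : Gi i), g ∉ Set.range (φ i) → ∀ x ∈ X (!i),
      Monoid.PushoutI.of (φ := φ) i g • x ∈ Xe i)
    (hfaith : ∀ (i : Bool) (a : A),
      (∀ x ∈ Xe i, Monoid.PushoutI.of (φ := φ) i (φ i a) • x = x) → a = 1)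
    (hmiss : ∃ i, ∃ x ∈ X i, ∀ g : Gi i, g ∉ Set.range (φ i) → ∀ z ∈ X (!i),
      Monoid.PushoutI.of (φ := φ) i g • z ≠ x) :
    ∀ w : Monoid.PushoutI φ, (∀ x : Ω, w • x = x) → w = 1 :=
  pingPong_amalgamated_general Gi φ hφ X Xe hnonempty hdisj hXe hpp hfaith hmiss
end

section
/- Let G act on a set Ω as above with a proper interactive pair. If g ∈ G₁ *_A G₂ is written in normal form g = gₙhₙ⋯g₁h₁ with gᵢ ∈ G₁ \ A and hᵢ ∈ G₂ \ A, and x ∈ X₁ is a point not contained in (G₁ \ A)·X₂, then g(x) ∈ (G₁ \ A)·X₂; in particular g(x) ≠ x. -/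
/-!
Each factor `gᵢhᵢ` of the normal form maps `X₁` into `(G₁ \ A)·X₂ ⊆ X₁`: `hᵢ` sends `X₁` into `X₂`
and `gᵢ` sends `X₂` back into `(G₁ \ A)·X₂`. Hence the whole word maps `x` into `(G₁ \ A)·X₂`,
which does not contain `x`.
-/

open scoped Pointwise

section PingPong

variable {G Ω : Type*} [Monoid G] [MulAction G Ω] {S T : Set G} {X Y : Set Ω}

theorem mul_smul_mem_smul_of_mem {g h : G} (hg : g ∈ S) (hh : h ∈ T) (hT : T • X ⊆ Y)
    {x : Ω} (hx : x ∈ X) : (g * h) • x ∈ S • Y := by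
  rw [mul_smul]
  exact Set.smul_mem_smul hg (hT (Set.smul_mem_smul hh hx))

theorem prod_map_mul_smul_mem (hS : S • Y ⊆ X) (hT : T • X ⊆ Y) {l : List (G × G)}
    (hmem : ∀ p ∈ l, p.1 ∈ S ∧ p.2 ∈ T) {x : Ω} (hx : x ∈ X) :
    (l.map fun p => p.1 * p.2).prod • x ∈ X := by
  induction l with
  | nil => simpa using hx
  | cons p t ih =>
    obtain ⟨hp₁, hp₂⟩ := hmem p List.mem_cons_self
    rw [List.map_cons, List.prod_cons, mul_smul]
    exact hS (mul_smul_mem_smul_of_mem hp₁ hp₂ hT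
      (ih fun q hq => hmem q (List.mem_cons_of_mem p hq)))

theorem prod_map_mul_smul_mem_smul (hS : S • Y ⊆ X) (hT : T • X ⊆ Y) {l : List (G × G)}
    (hl : l ≠ []) (hmem : ∀ p ∈ l, p.1 ∈ S ∧ p.2 ∈ T) {x : Ω} (hx : x ∈ X) :
    (l.map fun p => p.1 * p.2).prod • x ∈ S • Y := by
  obtain ⟨p, t, rfl⟩ := List.exists_cons_of_ne_nil hl
  obtain ⟨hp₁, hp₂⟩ := hmem p List.mem_cons_self
  rw [List.map_cons, List.prod_cons, mul_smul]
  exact mul_smul_mem_smul_of_mem hp₁ hp₂ hT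
    (prod_map_mul_smul_mem hS hT (fun q hq => hmem q (List.mem_cons_of_mem p hq)) hx)

end PingPong

theorem pingPong_normal_form_moves_general {G Ω : Type*} [Group G] [MulAction G Ω]
    (G₁ G₂ A : Subgroup G)
    (X₁ X₂ X₁e X₂e : Set Ω)
    (h1e : X₁e ⊆ X₁) (h2e : X₂e ⊆ X₂)
    (h12 : ∀ g ∈ G₁, g ∉ A → ∀ x ∈ X₂, g • x ∈ X₁e)
    (h21 : ∀ g ∈ G₂, g ∉ A → ∀ x ∈ X₁, g • x ∈ X₂e)
    (l : List (G × G)) (hl : l ≠ [])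
    (hmem : ∀ p ∈ l, p.1 ∈ G₁ ∧ p.1 ∉ A ∧ p.2 ∈ G₂ ∧ p.2 ∉ A)
    (x : Ω) (hx : x ∈ X₁)
    (hxnot : ∀ g ∈ G₁, g ∉ A → ∀ z ∈ X₂, g • z ≠ x) :
    (∃ g ∈ G₁, g ∉ A ∧ ∃ z ∈ X₂, (l.map fun p => p.1 * p.2).prod • x = g • z) ∧
      (l.map fun p => p.1 * p.2).prod • x ≠ x := by
  have hS : ((G₁ : Set G) \ A) • X₂ ⊆ X₁ :=
    Set.smul_subset_iff.2 fun g hg z hz => h1e (h12 g hg.1 hg.2 z hz)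
  have hT : ((G₂ : Set G) \ A) • X₁ ⊆ X₂ :=
    Set.smul_subset_iff.2 fun h hh y hy => h2e (h21 h hh.1 hh.2 y hy)
  obtain ⟨g, ⟨hg₁, hgA⟩, z, hz, hgz⟩ := prod_map_mul_smul_mem_smul hS hT hl
    (fun p hp => have h := hmem p hp; ⟨⟨h.1, h.2.1⟩, h.2.2.1, h.2.2.2⟩) hx
  refine ⟨⟨g, hg₁, hgA, z, hz, hgz.symm⟩, ?_⟩
  rw [← hgz]
  exact hxnot g hg₁ hgA z hz

/-- In the ping-pong setting for an amalgamated product acting on `Ω` (proper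
interactive pair): if `g = gₙhₙ⋯g₁h₁` in normal form, with `gᵢ ∈ G₁ \ A` and
`hᵢ ∈ G₂ \ A`, and `x ∈ X₁` is not contained in `(G₁ \ A)·X₂`, then
`g(x) ∈ (G₁ \ A)·X₂`; in particular `g(x) ≠ x`. -/
theorem pingPong_normal_form_moves {G Ω : Type*} [Group G] [MulAction G Ω]
    (G₁ G₂ A : Subgroup G) (hA1 : A ≤ G₁) (hA2 : A ≤ G₂)
    (X₁ X₂ X₁e X₂e : Set Ω)
    (hdisj : Disjoint X₁ X₂) (h1e : X₁e ⊆ X₁) (h2e : X₂e ⊆ X₂)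
    (hA1e : ∀ a ∈ A, ∀ x ∈ X₁e, a • x ∈ X₁e)
    (hA2e : ∀ a ∈ A, ∀ x ∈ X₂e, a • x ∈ X₂e)
    (h12 : ∀ g ∈ G₁, g ∉ A → ∀ x ∈ X₂, g • x ∈ X₁e)
    (h21 : ∀ g ∈ G₂, g ∉ A → ∀ x ∈ X₁, g • x ∈ X₂e)
    (l : List (G × G)) (hl : l ≠ [])
    (hmem : ∀ p ∈ l, p.1 ∈ G₁ ∧ p.1 ∉ A ∧ p.2 ∈ G₂ ∧ p.2 ∉ A)
    (x : Ω) (hx : x ∈ X₁)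
    (hxnot : ∀ g ∈ G₁, g ∉ A → ∀ z ∈ X₂, g • z ≠ x) :
    (∃ g ∈ G₁, g ∉ A ∧ ∃ z ∈ X₂, (l.map fun p => p.1 * p.2).prod • x = g • z) ∧
      (l.map fun p => p.1 * p.2).prod • x ≠ x :=
  pingPong_normal_form_moves_general G₁ G₂ A X₁ X₂ X₁e X₂e h1e h2e h12 h21 l hl hmem x hx hxnot
end

section
/- Let G₀ be a group, A ≤ G₀ a subgroup with two injections α, ω : A → G₀, and let G = G₀*_A = ⟨G₀, s | s⁻¹α(a)s = ω(a) for a ∈ A⟩ be the HNN extension, with α(A) ≠ G₀. Suppose G acts on a set Ω containing pairwise disjoint nonempty subsets X₀, Z_s, Z_{s̄} such that: s(X₀ ∪ Z_s) ⊆ Z_s and s⁻¹(X₀ ∪ Z_{s̄}) ⊆ Z_{s̄}; α(A)·Z_s ⊆ Z_s and ω(A)·Z_{s̄} ⊆ Z_{s̄}; (G₀ \ α(A))·Z_s ⊆ X₀ and (G₀ \ ω(A))·Z_{s̄} ⊆ X₀; the restricted actions of α(A) on Z_s and of ω(A) on Z_{s̄} are faithful; and the union (G₀ \ α(A))·Z_s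 ∪ (G₀ \ ω(A))·Z_{s̄} misses a point of X₀. Then the action of G on Ω is faithful. -/
/-- **Ping-pong lemma for HNN extensions** (Maskit, VII.D.12).
Let `G = G₀*_A` be an HNN extension (in Mathlib's formulation `HNNExtension G₀ A B φ`,
where the relation is `t (of a) t⁻¹ = of (φ a)`; the paper's image `α(A)` of the edge
group corresponds to the subgroup `B`, and `ω(A)` to `A`), with `α(A) = B ≠ G₀`.
Suppose `G` acts on a set `Ω` containing pairwise disjoint nonempty subsets
`X₀, Z, Z'` such that `t(X₀ ∪ Z) ⊆ Z`, `t⁻¹(X₀ ∪ Z') ⊆ Z'`, `B·Z ⊆ Z`, `A·Z' ⊆ Z'`,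
`(G₀ \ B)·Z ⊆ X₀`, `(G₀ \ A)·Z' ⊆ X₀`, the restricted actions of `B` on `Z` and
of `A` on `Z'` are faithful, and the union `(G₀ \ B)·Z ∪ (G₀ \ A)·Z'` misses a point
of `X₀`.  Then the action of `G` on `Ω` is faithful. -/
theorem pingPong_HNN {G₀ : Type*} [Group G₀] (A B : Subgroup G₀) (φ : A ≃* B)
    (hBne : B ≠ ⊤)
    {Ω : Type*} [MulAction (HNNExtension G₀ A B φ) Ω]
    (X₀ Z Z' : Set Ω)
    (hX₀ne : X₀.Nonempty) (hZne : Z.Nonempty) (hZ'ne : Z'.Nonempty)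
    (hd1 : Disjoint X₀ Z) (hd2 : Disjoint X₀ Z') (hd3 : Disjoint Z Z')
    (ht : ∀ x ∈ X₀ ∪ Z, (HNNExtension.t : HNNExtension G₀ A B φ) • x ∈ Z)
    (ht' : ∀ x ∈ X₀ ∪ Z', (HNNExtension.t : HNNExtension G₀ A B φ)⁻¹ • x ∈ Z')
    (hB : ∀ b ∈ B, ∀ x ∈ Z, (HNNExtension.of b : HNNExtension G₀ A B φ) • x ∈ Z)
    (hA : ∀ a ∈ A, ∀ x ∈ Z', (HNNExtension.of a : HNNExtension G₀ A B φ) • x ∈ Z')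
    (hBc : ∀ g ∉ B, ∀ x ∈ Z, (HNNExtension.of g : HNNExtension G₀ A B φ) • x ∈ X₀)
    (hAc : ∀ g ∉ A, ∀ x ∈ Z', (HNNExtension.of g : HNNExtension G₀ A B φ) • x ∈ X₀)
    (hfB : ∀ b ∈ B, (∀ x ∈ Z, (HNNExtension.of b : HNNExtension G₀ A B φ) • x = x) → b = 1)
    (hfA : ∀ a ∈ A, (∀ x ∈ Z', (HNNExtension.of a : HNNExtension G₀ A B φ) • x = x) → a = 1)
    (hmiss : ∃ p ∈ X₀,
      (∀ g ∉ B, ∀ x ∈ Z, (HNNExtension.of g : HNNExtension G₀ A B φ) • x ≠ p) ∧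
      (∀ g ∉ A, ∀ x ∈ Z', (HNNExtension.of g : HNNExtension G₀ A B φ) • x ≠ p)) :
    ∀ w : HNNExtension G₀ A B φ, (∀ x : Ω, w • x = x) → w = 1 := by
  classical
  obtain ⟨p, hp, hmiss1, hmiss2⟩ := hmiss
  intro w hw
  let R : ℤˣ × G₀ → ℤˣ × G₀ → Prop :=
    fun a b => a.2 ∈ HNNExtension.toSubgroup A B a.1 → a.1 = b.1
  let S : ℤˣ → Set Ω := fun u => if u = 1 then Z else Z'
  let pl : List (ℤˣ × G₀) → HNNExtension G₀ A B φ :=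
    fun l => (l.map (fun x =>
      (HNNExtension.t ^ (x.1 : ℤ) * HNNExtension.of x.2 : HNNExtension G₀ A B φ))).prod
  have hS1 : S 1 = Z := if_pos rfl
  have hSneg : S (-1) = Z' := if_neg (by decide)
  have htu : ∀ (u : ℤˣ) (x : Ω), x ∈ X₀ ∪ S u →
      (HNNExtension.t : HNNExtension G₀ A B φ) ^ (u : ℤ) • x ∈ S u := by
    intro u x hx
    rcases Int.units_eq_one_or u with rfl | rfl
    · rw [hS1]
      rw [hS1] at hx
      simpa using ht x hx
    · rw [hSneg]
      rw [hSneg] at hx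
      have h1 : ((-1 : ℤˣ) : ℤ) = -1 := rfl
      rw [h1, zpow_neg_one]
      exact ht' x hx
  have key : ∀ (l : List (ℤˣ × G₀)) (u : ℤˣ),
      List.Chain' R (l ++ [(u, 1)]) →
      pl (l ++ [(u, 1)]) • p ∈ S ((l.head?.map Prod.fst).getD u) := by
    intro l
    induction l with
    | nil =>
      intro u _
      have hpl : pl ([] ++ [(u, (1 : G₀))]) = HNNExtension.t ^ (u : ℤ) := by
        simp [pl]
      rw [hpl]
      simpa using htu u p (Or.inl hp)
    | cons a l ih =>
      intro u hc
      rw [List.cons_append] at hc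
      obtain ⟨hRa, hc'⟩ := List.isChain_cons.mp hc
      have hq := ih u hc'
      have hRa' : a.2 ∈ HNNExtension.toSubgroup A B a.1 →
          a.1 = (l.head?.map Prod.fst).getD u := by
        cases l with
        | nil => intro h; simpa using hRa (u, 1) rfl h
        | cons b l => intro h; simpa using hRa b rfl h
      have hsplit : pl ((a :: l) ++ [(u, 1)]) • p
          = (HNNExtension.t ^ (a.1 : ℤ) : HNNExtension G₀ A B φ) •
            ((HNNExtension.of a.2 : HNNExtension G₀ A B φ) • (pl (l ++ [(u, 1)]) • p)) := by
        have h1 : pl ((a :: l) ++ [(u, 1)])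
            = (HNNExtension.t ^ (a.1 : ℤ) * HNNExtension.of a.2) * pl (l ++ [(u, 1)]) := by
          simp only [pl, List.cons_append, List.map_cons, List.prod_cons]
        rw [h1, mul_smul, mul_smul]
      have hgoal : ((((a :: l)).head?.map Prod.fst).getD u) = a.1 := rfl
      rw [hgoal, hsplit]
      rcases Int.units_eq_one_or ((l.head?.map Prod.fst).getD u) with hv | hv
      · rw [hv, hS1] at hq
        by_cases hg : a.2 ∈ B
        · have ha1 : a.1 = 1 := by
            rcases Int.units_eq_one_or a.1 with h | h
            · exact h
            · exfalso
              have h2 := hRa' (by rw [h, HNNExtension.toSubgroup_neg_one]; exact hg)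
              rw [h, hv] at h2
              exact absurd h2 (by decide)
          have h2 : (HNNExtension.of a.2 : HNNExtension G₀ A B φ) •
              (pl (l ++ [(u, 1)]) • p) ∈ Z := hB _ hg _ hq
          rw [ha1]
          exact htu 1 _ (Or.inr (by rwa [hS1]))
        · have h2 : (HNNExtension.of a.2 : HNNExtension G₀ A B φ) •
              (pl (l ++ [(u, 1)]) • p) ∈ X₀ := hBc _ hg _ hq
          exact htu a.1 _ (Or.inl h2)
      · rw [hv, hSneg] at hq
        by_cases hg : a.2 ∈ A
        · have ha1 : a.1 = -1 := by
            rcases Int.units_eq_one_or a.1 with h | h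
            · exfalso
              have h2 := hRa' (by rw [h, HNNExtension.toSubgroup_one]; exact hg)
              rw [h, hv] at h2
              exact absurd h2 (by decide)
            · exact h
          have h2 : (HNNExtension.of a.2 : HNNExtension G₀ A B φ) •
              (pl (l ++ [(u, 1)]) • p) ∈ Z' := hA _ hg _ hq
          rw [ha1]
          exact htu (-1) _ (Or.inr (by rwa [hSneg]))
        · have h2 : (HNNExtension.of a.2 : HNNExtension G₀ A B φ) •
              (pl (l ++ [(u, 1)]) • p) ∈ X₀ := hAc _ hg _ hq
          exact htu a.1 _ (Or.inl h2)
  have chain_transfer : ∀ (l : List (ℤˣ × G₀)) (a : ℤˣ × G₀),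
      List.Chain' R (l ++ [a]) → List.Chain' R (l ++ [(a.1, 1)]) := by
    intro l a h
    unfold List.Chain' at h ⊢
    rw [List.isChain_append] at h ⊢
    refine ⟨h.1, List.isChain_singleton _, ?_⟩
    intro x hx y hy
    have h3 := h.2.2 x hx a rfl
    simp only [List.head?_cons, Option.mem_def, Option.some_inj] at hy
    subst hy
    exact h3
  obtain ⟨d⟩ := HNNExtension.NormalWord.TransversalPair.nonempty G₀ A B
  set n : HNNExtension.NormalWord d :=
    w • (HNNExtension.NormalWord.empty : HNNExtension.NormalWord d) with hn
  have hwp : n.prod φ = w := by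
    rw [hn, HNNExtension.NormalWord.prod_smul, HNNExtension.NormalWord.prod_empty, mul_one]
  have hw_eq : w = HNNExtension.of n.head * pl n.toList := by
    rw [← hwp]
    rfl
  have hch : List.Chain' R n.toList := n.chain
  rcases n.toList.eq_nil_or_concat with hnil | ⟨l', a, hcat⟩
  all_goals try rw [List.concat_eq_append] at hcat
  · have hw_eq' : w = HNNExtension.of n.head := by
      rw [hw_eq, hnil]
      simp [pl]
    by_cases hh : n.head ∈ B
    · have h1 : n.head = 1 := by
        refine hfB _ hh fun x _ => ?_
        rw [← hw_eq']
        exact hw x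
      rw [hw_eq', h1, map_one]
    · obtain ⟨z, hz⟩ := hZne
      have h1 : (HNNExtension.of n.head : HNNExtension G₀ A B φ) • z ∈ X₀ := hBc _ hh z hz
      have h2 : (HNNExtension.of n.head : HNNExtension G₀ A B φ) • z = z := by
        rw [← hw_eq']; exact hw z
      rw [h2] at h1
      exact absurd hz (Set.disjoint_left.mp hd1 h1)
  · have key_eq : (HNNExtension.of a.2 : HNNExtension G₀ A B φ) * w *
        (HNNExtension.of a.2 : HNNExtension G₀ A B φ)⁻¹
        = HNNExtension.of (a.2 * n.head) * pl (l' ++ [(a.1, 1)]) := by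
      rw [hw_eq, hcat]
      simp only [pl, List.map_append, List.prod_append, List.map_cons, List.map_nil,
        List.prod_cons, List.prod_nil, map_mul, map_one]
      group
    have htriv : ((HNNExtension.of a.2 : HNNExtension G₀ A B φ) * w *
        (HNNExtension.of a.2 : HNNExtension G₀ A B φ)⁻¹) • p = p := by
      rw [mul_smul, mul_smul, hw, smul_inv_smul]
    have hch2 : List.Chain' R (l' ++ [(a.1, 1)]) :=
      chain_transfer l' a (hcat ▸ hch)
    have hk := key l' a.1 hch2
    have hpq : (HNNExtension.of (a.2 * n.head) : HNNExtension G₀ A B φ) •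
        (pl (l' ++ [(a.1, 1)]) • p) = p := by
      rw [← mul_smul, ← key_eq]
      exact htriv
    rcases Int.units_eq_one_or ((l'.head?.map Prod.fst).getD a.1) with hv | hv
    · rw [hv, hS1] at hk
      by_cases hgB : a.2 * n.head ∈ B
      · have h1 : p ∈ Z := hpq ▸ hB _ hgB _ hk
        exact absurd h1 (Set.disjoint_left.mp hd1 hp)
      · exact absurd hpq (hmiss1 _ hgB _ hk)
    · rw [hv, hSneg] at hk
      by_cases hgA : a.2 * n.head ∈ A
      · have h1 : p ∈ Z' := hpq ▸ hA _ hgA _ hk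
        exact absurd h1 (Set.disjoint_left.mp hd2 hp)
      · exact absurd hpq (hmiss2 _ hgA _ hk)
end

section
/- Let G₀ be a group and G = G₀ ⋊ ℤ a semidirect product where every element writes uniquely as g₀sⁿ with g₀ ∈ G₀, n ∈ ℤ. Suppose G acts on a set Ω containing disjoint subsets Z_s, Z_{s̄} preserved by G₀, a point p ∈ Ω \ (Z_s ∪ Z_{s̄}) with sⁿ(p) ∈ Z_s for all n > 0 and sⁿ(p) ∈ Z_{s̄} for all n < 0, and suppose the action of G₀ on Ω is faithful. Then the action of G on Ω is faithful. -/
/-! A ping-pong argument: if `g₀ sⁿ` fixes every point, then `g₀ ∈ G₀` maps `sⁿ p` back to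
`p ∉ Z ∪ Z'`; as `G₀` preserves `Z` and `Z'`, this forces `n = 0`, so `g = g₀ ∈ G₀`
and faithfulness of `G₀` applies. -/

lemma zpow_eq_zero_of_smul_zpow_smul_eq_self {G Ω : Type*} [Group G] [MulAction G Ω]
    {G₀ : Subgroup G} {s : G} {Z Z' : Set Ω}
    (hG₀Z : ∀ g ∈ G₀, ∀ x ∈ Z, g • x ∈ Z) (hG₀Z' : ∀ g ∈ G₀, ∀ x ∈ Z', g • x ∈ Z')
    {p : Ω} (hp : p ∉ Z ∪ Z')
    (hpos : ∀ n : ℤ, 0 < n → s ^ n • p ∈ Z) (hneg : ∀ n : ℤ, n < 0 → s ^ n • p ∈ Z')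
    {g₀ : G} (hg₀ : g₀ ∈ G₀) {n : ℤ} (hfix : g₀ • s ^ n • p = p) : n = 0 := by
  rcases lt_trichotomy n 0 with hn | hn | hn
  · exact absurd (Or.inr (hfix ▸ hG₀Z' g₀ hg₀ _ (hneg n hn))) hp
  · exact hn
  · exact absurd (Or.inl (hfix ▸ hG₀Z g₀ hg₀ _ (hpos n hn))) hp

theorem faithful_of_semidirect_Z_general {G Ω : Type*} [Group G] [MulAction G Ω]
    (G₀ : Subgroup G) (s : G)
    (huniq : ∀ g : G, ∃! p : G₀ × ℤ, g = (p.1 : G) * s ^ p.2)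
    (Z Z' : Set Ω)
    (hG₀Z : ∀ g ∈ G₀, ∀ x ∈ Z, g • x ∈ Z)
    (hG₀Z' : ∀ g ∈ G₀, ∀ x ∈ Z', g • x ∈ Z')
    (p : Ω) (hp : p ∉ Z ∪ Z')
    (hpos : ∀ n : ℤ, 0 < n → s ^ n • p ∈ Z)
    (hneg : ∀ n : ℤ, n < 0 → s ^ n • p ∈ Z')
    (hfaith : ∀ g ∈ G₀, (∀ x : Ω, g • x = x) → g = 1) :
    ∀ g : G, (∀ x : Ω, g • x = x) → g = 1 := by
  intro g hg
  obtain ⟨⟨g₀, n⟩, rfl, -⟩ := huniq g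
  have hn : n = 0 :=
    zpow_eq_zero_of_smul_zpow_smul_eq_self hG₀Z hG₀Z' hp hpos hneg g₀.2
      (by simpa only [mul_smul] using hg p)
  subst hn
  simp only [zpow_zero, mul_one] at hg ⊢
  exact hfaith g₀ g₀.2 hg

/-- Let `G = G₀ ⋊ ℤ` where every element writes uniquely as `g₀ * sⁿ` with `g₀ ∈ G₀`
and `n ∈ ℤ`.  Suppose `G` acts on a set `Ω` containing disjoint subsets `Z, Z'`
preserved by `G₀`, and there is a point `p ∉ Z ∪ Z'` with `sⁿ(p) ∈ Z` for all `n > 0`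
and `sⁿ(p) ∈ Z'` for all `n < 0`.  If the action of `G₀` on `Ω` is faithful, then the
action of `G` on `Ω` is faithful. -/
theorem faithful_of_semidirect_Z {G Ω : Type*} [Group G] [MulAction G Ω]
    (G₀ : Subgroup G) (s : G)
    (huniq : ∀ g : G, ∃! p : G₀ × ℤ, g = (p.1 : G) * s ^ p.2)
    (Z Z' : Set Ω) (hdisj : Disjoint Z Z')
    (hG₀Z : ∀ g ∈ G₀, ∀ x ∈ Z, g • x ∈ Z)
    (hG₀Z' : ∀ g ∈ G₀, ∀ x ∈ Z', g • x ∈ Z')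
    (p : Ω) (hp : p ∉ Z ∪ Z')
    (hpos : ∀ n : ℤ, 0 < n → s ^ n • p ∈ Z)
    (hneg : ∀ n : ℤ, n < 0 → s ^ n • p ∈ Z')
    (hfaith : ∀ g ∈ G₀, (∀ x : Ω, g • x = x) → g = 1) :
    ∀ g : G, (∀ x : Ω, g • x = x) → g = 1 :=
  faithful_of_semidirect_Z_general G₀ s huniq Z Z' hG₀Z hG₀Z' p hp hpos hneg hfaith
end

section
/- In the setting of a proper right action of G on a tree X with connected fundamental domain T, let G° := {g ∈ G : g fixes a vertex of T}. For components c, d of X \ T and g ∉ G°, one has X_c·g ⊆ X_d if and only if g ∈ W_d and g⁻¹ ∉ W_c. -/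
/-- `C` is a connected component of the subset `K` of the graph `X`:
a maximal nonempty connected subset of `K`. -/
def IsCompOf {V : Type*} (X : SimpleGraph V) (K C : Set V) : Prop :=
  C.Nonempty ∧ C ⊆ K ∧ (X.induce C).Connected ∧
    ∀ D : Set V, C ⊆ D → D ⊆ K → (X.induce D).Connected → D = C

/-- `W_C = {g ∈ G : T·g ⊆ C}` for a right action `act` of `G`. -/
def Wset {V G : Type*} (act : V → G → V) (T C : Set V) : Set G :=
  {g | ∀ v ∈ T, act v g ∈ C}

/-!
Pick an edge `u — w` with `u ∈ C` and `w ∈ T`; it exists because `X` is connected. Since `T` is a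
fundamental domain and `g` fixes no vertex of `T`, both `T·g` and `T·g⁻¹` lie in `X \ T`. A
connected subset of `X \ T` lies in the component of any of its points, so each inclusion
`C·g ⊆ D`, `T·g ⊆ D`, `T·g⁻¹ ⊆ C` only has to be checked at one point, and the edge `u — w`,
moved by `g`, provides that point in each direction of the equivalence.
-/

open Set

theorem SimpleGraph.Connected.induce_image {V W : Type*} {X : SimpleGraph V}
    {Y : SimpleGraph W} (f : X →g Y) {S : Set V} (hS : (X.induce S).Connected) :
    (Y.induce (f '' S)).Connected :=
  hS.map (show X.induce S →g Y.induce (f '' S) from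
      ⟨fun v => ⟨f v, mem_image_of_mem f v.2⟩, fun h => f.map_adj h⟩)
    (by rintro ⟨_, v, hv, rfl⟩; exact ⟨⟨v, hv⟩, rfl⟩)

namespace IsCompOf

variable {V : Type*} {X : SimpleGraph V} {K C : Set V}

theorem subset_of_connected (hC : IsCompOf X K C) {S : Set V} (hSK : S ⊆ K)
    (hS : (X.induce S).Connected) (hmeet : (S ∩ C).Nonempty) : S ⊆ C := by
  have hunion : C ∪ S = C :=
    hC.2.2.2 (C ∪ S) subset_union_left (union_subset hC.2.1 hSK)
      (SimpleGraph.induce_union_connected hC.2.2.1.preconnected hS.preconnected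
        (by rwa [inter_comm]))
  exact hunion ▸ subset_union_right

theorem mem_of_adj (hC : IsCompOf X K C) {u w : V} (hu : u ∈ C) (hw : w ∈ K)
    (huw : X.Adj u w) : w ∈ C :=
  hC.subset_of_connected (pair_subset (hC.2.1 hu) hw)
    (SimpleGraph.induce_pair_connected_of_adj huw) ⟨u, by simp, hu⟩ (by simp)

theorem exists_adj_notMem (hX : X.Preconnected) (hC : IsCompOf X K C) {x : V} (hx : x ∉ K) :
    ∃ u ∈ C, ∃ w ∉ K, X.Adj u w := by
  obtain ⟨c, hc⟩ := hC.1
  obtain ⟨d, -, hdC, hdC'⟩ :=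
    (hX c x).some.exists_boundary_dart C hc fun hxC => hx (hC.2.1 hxC)
  exact ⟨d.fst, hdC, d.snd, fun hK => hdC' (hC.mem_of_adj hdC hK d.adj), d.adj⟩

theorem mapsTo_of_connected {W : Type*} {Y : SimpleGraph W} (hC : IsCompOf X K C)
    (f : Y →g X) {S : Set W} (hS : (Y.induce S).Connected) (hSK : MapsTo f S K)
    (hmeet : ∃ s ∈ S, f s ∈ C) : MapsTo f S C := by
  obtain ⟨s, hs, hsC⟩ := hmeet
  exact image_subset_iff.mp <| hC.subset_of_connected (image_subset_iff.mpr hSK)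
    (hS.induce_image f) ⟨f s, mem_image_of_mem f hs, hsC⟩

end IsCompOf

theorem eq_of_mem_of_act_mem {V G : Type*} [Monoid G] {act : V → G → V}
    (hact1 : ∀ v, act v 1 = v) {T : Set V} (hfund : ∀ v : V, ∃! u, u ∈ T ∧ ∃ g : G, act v g = u)
    {t : V} {g : G} (ht : t ∈ T) (htg : act t g ∈ T) : act t g = t :=
  (hfund t).unique ⟨htg, g, rfl⟩ ⟨ht, 1, hact1 t⟩

theorem comp_maps_iff_of_not_elliptic_general {V G : Type*} [Group G] (X : SimpleGraph V)
    (htree : X.IsTree)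
    (act : V → G → V)
    (hact1 : ∀ v, act v 1 = v)
    (hactmul : ∀ v (g h : G), act (act v g) h = act v (g * h))
    (hadj : ∀ (g : G) (u v : V), X.Adj u v ↔ X.Adj (act u g) (act v g))
    (T : Set V) (hTconn : (X.induce T).Connected)
    (hfund : ∀ v : V, ∃! u, u ∈ T ∧ ∃ g : G, act v g = u)
    (C D : Set V) (hC : IsCompOf X Tᶜ C) (hD : IsCompOf X Tᶜ D)
    (g : G) (hg : ¬ ∃ v ∈ T, act v g = v) :
    (∀ v ∈ C, act v g ∈ D) ↔ (g ∈ Wset act T D ∧ g⁻¹ ∉ Wset act T C) := by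
  have act_act_inv (v : V) : act (act v g) g⁻¹ = v := by rw [hactmul, mul_inv_cancel, hact1]
  have act_inv_act (v : V) : act (act v g⁻¹) g = v := by rw [hactmul, inv_mul_cancel, hact1]
  let φ : X →g X := ⟨(act · g), (hadj g _ _).1⟩
  let ψ : X →g X := ⟨(act · g⁻¹), (hadj g⁻¹ _ _).1⟩
  have hTg : MapsTo φ T Tᶜ := fun t ht htg => hg ⟨t, ht, eq_of_mem_of_act_mem hact1 hfund ht htg⟩
  have hTg' : MapsTo ψ T Tᶜ := fun t ht htg => hTg htg (by simpa [φ, ψ, act_inv_act] using ht)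
  obtain ⟨t, ht⟩ := hTconn.nonempty
  obtain ⟨u, hu, w, hw, huw⟩ :=
    hC.exists_adj_notMem htree.connected.preconnected (not_not.mpr ht)
  rw [notMem_compl_iff] at hw
  constructor
  · intro hCD
    refine ⟨hD.mapsTo_of_connected φ hTconn hTg
      ⟨w, hw, hD.mem_of_adj (hCD u hu) (hTg hw) ((hadj g u w).1 huw)⟩, fun hWC => ?_⟩
    exact hD.2.1 (by simpa only [act_inv_act] using hCD _ (hWC w hw)) hw
  · rintro ⟨hWD, hWC⟩
    have hCg : MapsTo φ C Tᶜ := fun c hc hcT =>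
      hWC <| hC.mapsTo_of_connected ψ hTconn hTg' ⟨act c g, hcT, by simpa [ψ, act_act_inv]⟩
    exact hD.mapsTo_of_connected φ hC.2.2.1 hCg
      ⟨u, hu, hD.mem_of_adj (hWD w hw) (hCg hu) ((hadj g w u).1 huw.symm)⟩

/-- In the setting of a proper right action of `G` on a tree `X` (without edge
inversions) with connected fundamental domain `T`, let `G° = {g : g fixes a vertex of
T}`.  For components `C, D` of `X \ T` and `g ∉ G°`, one has `X_C·g ⊆ X_D` if and only
if `g ∈ W_D` and `g⁻¹ ∉ W_C`. -/
theorem comp_maps_iff_of_not_elliptic {V G : Type*} [Group G] (X : SimpleGraph V)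
    (htree : X.IsTree)
    (act : V → G → V)
    (hact1 : ∀ v, act v 1 = v)
    (hactmul : ∀ v (g h : G), act (act v g) h = act v (g * h))
    (hadj : ∀ (g : G) (u v : V), X.Adj u v ↔ X.Adj (act u g) (act v g))
    (hnoinv : ∀ (g : G) (u v : V), X.Adj u v → ¬(act u g = v ∧ act v g = u))
    (hproper : ∀ v : V, {g : G | act v g = v}.Finite)
    (T : Set V) (hTconn : (X.induce T).Connected)
    (hfund : ∀ v : V, ∃! u, u ∈ T ∧ ∃ g : G, act v g = u)
    (C D : Set V) (hC : IsCompOf X Tᶜ C) (hD : IsCompOf X Tᶜ D)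
    (g : G) (hg : ¬ ∃ v ∈ T, act v g = v) :
    (∀ v ∈ C, act v g ∈ D) ↔ (g ∈ Wset act T D ∧ g⁻¹ ∉ Wset act T C) :=
  comp_maps_iff_of_not_elliptic_general X htree act hact1 hactmul hadj T hTconn hfund C D hC hD g hg
end

section
/- In the setting of a proper right action of G on a tree X with connected fundamental domain T, for g ∈ G° (an element fixing a vertex of T) and components c, d of X \ T: X_c·g ⊆ X_d if and only if e_c·g ⊆ X_d, where e_c is the edge of X_c adjacent to T, oriented outwards. -/
private lemma aux_insert_connected {V : Type*} {X : SimpleGraph V} {A : Set V}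
    (hconn : (X.induce A).Connected) {a b : V} (ha : a ∈ A) (hab : X.Adj a b) :
    (X.induce (insert b A)).Connected := by
  have hsub : A ⊆ insert b A := Set.subset_insert _ _
  let ι : X.induce A →g X.induce (insert b A) := ⟨fun x => ⟨x.1, hsub x.2⟩, fun h => h⟩
  haveI : Nonempty (↥(insert b A)) := ⟨⟨a, hsub ha⟩⟩
  refine ⟨?_⟩
  intro x y
  have key : ∀ z : (insert b A : Set V),
      (X.induce (insert b A)).Reachable z ⟨a, hsub ha⟩ := by
    rintro ⟨z, hz⟩
    rcases hz with rfl | hz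
    · exact SimpleGraph.Adj.reachable (show X.Adj z a from hab.symm)
    · exact (hconn.preconnected ⟨z, hz⟩ ⟨a, ha⟩).map ι
  exact (key x).trans (key y).symm

private lemma aux_pathIn {V : Type*} {X : SimpleGraph V} (A : Set V)
    (hconn : (X.induce A).Connected) {x y : V} (hx : x ∈ A) (hy : y ∈ A) :
    ∃ p : X.Walk x y, p.IsPath ∧ ∀ z ∈ p.support, z ∈ A := by
  classical
  obtain ⟨q⟩ := hconn.preconnected ⟨x, hx⟩ ⟨y, hy⟩
  let ι : X.induce A →g X := ⟨Subtype.val, fun h => h⟩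
  refine ⟨(q.map ι).bypass, SimpleGraph.Walk.bypass_isPath _, ?_⟩
  intro z hz
  have hz' := SimpleGraph.Walk.support_bypass_subset _ hz
  rw [SimpleGraph.Walk.support_map] at hz'
  obtain ⟨w, hw, rfl⟩ := List.mem_map.1 hz'
  exact w.2

/-- In the setting of a proper right action of `G` on a tree `X` (without edge
inversions) with connected fundamental domain `T`: for `g ∈ G°` (an element fixing a
vertex of `T`) and components `C, D` of `X \ T`, one has `X_C·g ⊆ X_D` if and only if
`e_C·g ⊆ X_D`, where `e_C = (u_C, v_C)` is the edge of `X_C` adjacent to `T`, oriented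
outwards (so `u_C ∈ T`, `v_C ∈ C`, and `e_C·g ⊆ X_D` means that the image of its
outward part lies in `X_D`, i.e. `v_C·g ∈ X_D`). -/
theorem comp_maps_iff_of_elliptic {V G : Type*} [Group G] (X : SimpleGraph V)
    (htree : X.IsTree)
    (act : V → G → V)
    (hact1 : ∀ v, act v 1 = v)
    (hactmul : ∀ v (g h : G), act (act v g) h = act v (g * h))
    (hadj : ∀ (g : G) (u v : V), X.Adj u v ↔ X.Adj (act u g) (act v g))
    (hnoinv : ∀ (g : G) (u v : V), X.Adj u v → ¬(act u g = v ∧ act v g = u))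
    (hproper : ∀ v : V, {g : G | act v g = v}.Finite)
    (T : Set V) (hTconn : (X.induce T).Connected)
    (hfund : ∀ v : V, ∃! u, u ∈ T ∧ ∃ g : G, act v g = u)
    (C D : Set V) (hC : IsCompOf X Tᶜ C) (hD : IsCompOf X Tᶜ D)
    (uC vC : V) (huC : uC ∈ T) (hvC : vC ∈ C) (he : X.Adj uC vC)
    (g : G) (hg : ∃ v ∈ T, act v g = v) :
    (∀ v ∈ C, act v g ∈ D) ↔ act vC g ∈ D := by
  classical
  obtain ⟨t, htT, htg⟩ := hg
  obtain ⟨hCne, hCsub, hCconn, hCmax⟩ := hC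
  obtain ⟨hDne, hDsub, hDconn, hDmax⟩ := hD
  constructor
  · exact fun h => h vC hvC
  intro hvD
  -- basic facts
  have hCT : ∀ x ∈ C, x ∉ T := fun x hx => hCsub hx
  have hDT : ∀ x ∈ D, x ∉ T := fun x hx => hDsub hx
  have hinj : Function.Injective (fun v : V => act v g) := by
    intro a b hab
    have h2 : act (act a g) g⁻¹ = act (act b g) g⁻¹ := by
      simpa using congrArg (fun x => act x g⁻¹) hab
    rwa [hactmul, hactmul, mul_inv_cancel, hact1, hact1] at h2
  let σ : X →g X := ⟨fun v => act v g, fun h => (hadj g _ _).1 h⟩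
  have puniq : ∀ {x y : V} (p q : X.Walk x y), p.IsPath → q.IsPath → p = q := by
    intro x y p q hp hq
    exact congrArg Subtype.val (htree.IsAcyclic.path_unique ⟨p, hp⟩ ⟨q, hq⟩)
  -- any edge leaving C lands in T
  have exitT : ∀ a ∈ C, ∀ b, X.Adj a b → b ∉ C → b ∈ T := by
    intro a haC b hab hbC
    by_contra hbT
    have hconn' := aux_insert_connected hCconn haC hab
    have heq := hCmax (insert b C) (Set.subset_insert _ _)
      (by
        intro x hx
        rcases hx with rfl | hx
        · exact hbT
        · exact hCsub hx) hconn'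
    exact hbC (heq ▸ Set.mem_insert b C)
  -- the bridge edge between C and T is unique
  have bridge : ∀ a ∈ C, ∀ b ∈ T, X.Adj a b → a = vC ∧ b = uC := by
    intro a haC b hbT hab
    obtain ⟨P1, hP1, hP1s⟩ := aux_pathIn C hCconn haC hvC
    obtain ⟨P2, hP2, hP2s⟩ := aux_pathIn T hTconn hbT huC
    have haT : a ∉ T := hCT a haC
    have huCC : uC ∉ C := fun h => hCT uC h huC
    -- Q1 : walk a → uC through C then the bridge
    set Q1 : X.Walk a uC := P1.concat he.symm with hQ1def
    have hQ1 : Q1.IsPath := by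
      rw [SimpleGraph.Walk.isPath_def, hQ1def, SimpleGraph.Walk.support_concat,
        List.nodup_append']
      refine ⟨hP1.support_nodup, List.nodup_singleton _, ?_⟩
      intro x hx hx'
      rw [List.mem_singleton] at hx'
      subst hx'
      exact huCC (hP1s _ hx)
    -- Q2 : the edge then a walk through T
    set Q2 : X.Walk a uC := SimpleGraph.Walk.cons hab P2 with hQ2def
    have hQ2 : Q2.IsPath := by
      rw [SimpleGraph.Walk.isPath_def, hQ2def, SimpleGraph.Walk.support_cons,
        List.nodup_cons]
      exact ⟨fun h => haT (hP2s _ h), hP2.support_nodup⟩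
    have hQeq : Q1 = Q2 := puniq _ _ hQ1 hQ2
    -- the common support is contained in {a, uC}
    have hsup : Q1.support ⊆ [a, uC] := by
      intro x hx
      have hx1 : x ∈ C ∨ x = uC := by
        rw [hQ1def, SimpleGraph.Walk.support_concat,
          List.mem_append, List.mem_singleton] at hx
        rcases hx with hx | hx
        · exact Or.inl (hP1s _ hx)
        · exact Or.inr hx
      have hx2 : x = a ∨ x ∈ T := by
        have hx' : x ∈ Q2.support := hQeq ▸ hx
        rw [hQ2def, SimpleGraph.Walk.support_cons, List.mem_cons] at hx'
        rcases hx' with hx' | hx'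
        · exact Or.inl hx'
        · exact Or.inr (hP2s _ hx')
      rcases hx1 with hx1 | hx1
      · rcases hx2 with hx2 | hx2
        · simp [hx2]
        · exact absurd hx2 (hCT x hx1)
      · simp [hx1]
    have hlen : Q1.length ≤ 1 := by
      have h1 : Q1.support.length ≤ 2 := by
        have := (List.subperm_of_subset hQ1.support_nodup hsup).length_le
        simpa using this
      have h2 : Q1.support.length = Q1.length + 1 := Q1.length_support
      omega
    have hlen1 : P1.length = 0 := by
      have := SimpleGraph.Walk.length_concat P1 he.symm
      rw [← hQ1def] at this
      omega
    have hlen2 : P2.length = 0 := by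
      have h3 : Q2.length = P2.length + 1 := by
        rw [hQ2def]; simp
      rw [← hQeq] at h3
      omega
    exact ⟨SimpleGraph.Walk.eq_of_length_eq_zero hlen1,
      SimpleGraph.Walk.eq_of_length_eq_zero hlen2⟩
  -- every path from C to outside C passes through vC
  have passes : ∀ w ∈ C, ∀ y, y ∉ C → ∀ p : X.Walk w y, vC ∈ p.support := by
    intro w hwC y hyC p
    obtain ⟨d, hd, hdf, hds⟩ := p.exists_boundary_dart C hwC hyC
    have hdsT : d.snd ∈ T := exitT d.fst hdf d.snd d.adj hds
    have := bridge d.fst hdf d.snd hdsT d.adj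
    rw [← this.1]
    exact SimpleGraph.Walk.dart_fst_mem_support_of_mem_darts p hd
  -- image of C misses T
  have step1 : ∀ w ∈ C, act w g ∉ T := by
    intro w hwC hwT
    obtain ⟨p0⟩ := htree.isConnected.preconnected w t
    set p := p0.toPath.val with hpdef
    have hp : p.IsPath := p0.toPath.2
    have hvCp : vC ∈ p.support := passes w hwC t (fun h => hCT t h htT) p
    have hσp : (p.map σ).IsPath := SimpleGraph.Walk.map_isPath_of_injective hinj hp
    -- p.map σ is a walk from act w g to act t g = t
    have hmem : act vC g ∈ (p.map σ).support := by
      rw [SimpleGraph.Walk.support_map]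
      exact List.mem_map_of_mem hvCp
    set q : X.Walk (act w g) t := (p.map σ).copy rfl htg with hqdef
    have hq : q.IsPath := (SimpleGraph.Walk.isPath_copy _ rfl htg).2 hσp
    have hmem' : act vC g ∈ q.support := by
      rw [hqdef, SimpleGraph.Walk.support_copy]
      exact hmem
    -- but the unique path from (act w g) to t lies in T
    obtain ⟨r, hr, hrs⟩ := aux_pathIn T hTconn hwT htT
    have : q = r := puniq _ _ hq hr
    rw [this] at hmem'
    exact hDT _ hvD (hrs _ hmem')
  -- image of C together with D is a connected subset of Tᶜ containing D
  intro w hwC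
  set E : Set V := D ∪ (fun v => act v g) '' C with hEdef
  have hDE : D ⊆ E := Set.subset_union_left
  have hET : E ⊆ Tᶜ := by
    intro x hx
    rcases hx with hx | ⟨c, hc, rfl⟩
    · exact hDsub hx
    · exact step1 c hc
  have hvCE : act vC g ∈ E := hDE hvD
  have hEconn : (X.induce E).Connected := by
    haveI : Nonempty (↥E) := ⟨⟨act vC g, hvCE⟩⟩
    refine ⟨?_⟩
    intro x y
    have key : ∀ z : (E : Set V), (X.induce E).Reachable z ⟨act vC g, hvCE⟩ := by
      rintro ⟨z, hz⟩
      rcases hz with hz | ⟨c, hc, rfl⟩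
      · let ι : X.induce D →g X.induce E := ⟨fun x => ⟨x.1, hDE x.2⟩, fun h => h⟩
        exact (hDconn.preconnected ⟨z, hz⟩ ⟨act vC g, hvD⟩).map ι
      · let ι : X.induce C →g X.induce E :=
          ⟨fun x => ⟨act x.1 g, Or.inr ⟨x.1, x.2, rfl⟩⟩, fun h => (hadj g _ _).1 h⟩
        exact (hCconn.preconnected ⟨c, hc⟩ ⟨vC, hvC⟩).map ι
    exact (key x).trans (key y).symm
  have hED : E = D := hDmax E hDE hET hEconn
  have : act w g ∈ E := Or.inr ⟨w, hwC, rfl⟩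
  rwa [hED] at this
end

section
/- Let F = F(S₀) be a free group on a finite set S₀ with S = S₀ ∪ S₀⁻¹, and let a finite cyclic group ℤ_m act on F by automorphisms induced by a permutation of S. Then any group G fitting in a short exact sequence 1 → F → G → ℤ_m → 0, where the induced outer action is the given one, embeds into the semidirect product F(S₀) ⋊ ℤ_m. -/
private def RR {α : Type*} : (α × Bool) → (α × Bool) → Prop :=
  fun a b => ¬(a.1 = b.1 ∧ a.2 = !b.2)

private lemma reduce_eq_self_of_chain {α : Type*} [DecidableEq α] :
    ∀ L : List (α × Bool), List.Chain' RR L → FreeGroup.reduce L = L := by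
  intro L
  induction L with
  | nil => intro _; rfl
  | cons x L ih =>
    intro h
    unfold List.Chain' at h
    rw [List.isChain_cons] at h
    rw [FreeGroup.reduce.cons, ih h.2]
    cases L with
    | nil => rfl
    | cons hd tl =>
      have hx : ¬(x.1 = hd.1 ∧ x.2 = !hd.2) := h.1 hd rfl
      simp [hx]

private lemma not_chain'_decomp {α : Type*} :
    ∀ (M : List (α × Bool)), ¬ List.Chain' RR M →
      ∃ (L₂ : List (α × Bool)) (x : α) (b : Bool) (L₃ : List (α × Bool)),
        M = L₂ ++ (x, b) :: (x, !b) :: L₃ := by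
  intro M
  induction M with
  | nil => intro h; exact absurd List.isChain_nil h
  | cons a t ih =>
    intro h
    cases t with
    | nil => exact absurd (List.isChain_singleton a) h
    | cons b t' =>
      unfold List.Chain' at h
      rw [List.isChain_cons_cons] at h
      by_cases hab : RR a b
      · have hc : ¬ List.Chain' RR (b :: t') := fun hc => h ⟨hab, hc⟩
        obtain ⟨L₂, x, bb, L₃, hM⟩ := ih hc
        exact ⟨a :: L₂, x, bb, L₃, by rw [hM]; rfl⟩
      · unfold RR at hab
        rw [not_not] at hab
        obtain ⟨a1, a2⟩ := a
        obtain ⟨b1, b2⟩ := b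
        obtain ⟨h1, h2⟩ := hab
        simp only at h1 h2
        subst h1
        refine ⟨[], a1, a2, t', ?_⟩
        have hb : b2 = !a2 := by simp [h2]
        rw [hb]
        simp

private lemma chain'_toWord {α : Type*} [DecidableEq α] (x : FreeGroup α) :
    List.Chain' RR x.toWord := by
  by_contra h
  obtain ⟨L₂, a, b, L₃, hM⟩ := not_chain'_decomp _ h
  exact FreeGroup.reduce.not (L₁ := x.toWord) (by rw [FreeGroup.reduce_toWord]; exact hM)

private lemma freeGroup_eq_one_of_central {α : Type*} [Nontrivial α] {x : FreeGroup α}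
    (h : ∀ y : FreeGroup α, y * x * y⁻¹ = x) : x = 1 := by
  classical
  by_contra hx
  have hw : x.toWord ≠ [] := fun h' => hx (FreeGroup.toWord_eq_nil_iff.1 h')
  set w := x.toWord with hwdef
  obtain ⟨s, hs⟩ := exists_ne (w.head hw).1
  set ℓ := w.getLast hw with hℓ
  set b' : Bool := if ℓ.1 = s then !ℓ.2 else true with hb'
  have key : FreeGroup.mk [(s, b')] * x * (FreeGroup.mk [(s, b')])⁻¹ = x := h _
  have hxw : x = FreeGroup.mk w := FreeGroup.mk_toWord.symm
  have hM : FreeGroup.mk [(s, b')] * x * (FreeGroup.mk [(s, b')])⁻¹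
      = FreeGroup.mk ((s, b') :: (w ++ [(s, !b')])) := by
    conv_lhs => rw [hxw]
    rw [FreeGroup.inv_mk, FreeGroup.mul_mk, FreeGroup.mul_mk]
    simp [FreeGroup.invRev]
  have hlast : ¬(ℓ.1 = s ∧ ℓ.2 = b') := by
    rintro ⟨h1, h2⟩
    rw [hb', if_pos h1] at h2
    simp at h2
  have hchain : List.Chain' RR ((s, b') :: (w ++ [(s, !b')])) := by
    unfold List.Chain'
    rw [List.isChain_cons]
    constructor
    · intro y hy
      rw [List.head?_append_of_ne_nil _ hw, List.head?_eq_head hw] at hy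
      rw [Option.mem_some_iff] at hy
      subst hy
      exact fun hc => hs hc.1
    · rw [List.isChain_append]
      refine ⟨chain'_toWord x, List.isChain_singleton _, ?_⟩
      intro a ha y hy
      rw [List.getLast?_eq_getLast hw, Option.mem_some_iff] at ha
      rw [List.head?_cons, Option.mem_some_iff] at hy
      subst ha; subst hy
      rintro ⟨h1, h2⟩
      exact hlast ⟨h1, by simpa using h2⟩
  have hred : (FreeGroup.mk ((s, b') :: (w ++ [(s, !b')]))).toWord
      = (s, b') :: (w ++ [(s, !b')]) := by
    rw [FreeGroup.toWord_mk, reduce_eq_self_of_chain _ hchain]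
  have hww : (s, b') :: (w ++ [(s, !b')]) = w := by
    rw [← hred, hM.symm.trans key, ← hwdef]
  have := congrArg List.length hww
  simp at this
  omega


-- empty case
private theorem caseA0 {S₀ : Type*} [IsEmpty S₀] {m : ℕ}
    (θ : Multiplicative (ZMod m) →* MulAut (FreeGroup S₀))
    {G : Type*} [Group G]
    (i : FreeGroup S₀ →* G) (p : G →* Multiplicative (ZMod m))
    (hexact : i.range = p.ker) :
    ∃ e : G →* FreeGroup S₀ ⋊[θ] Multiplicative (ZMod m), Function.Injective e := by
  have htriv : ∀ x : FreeGroup S₀, x = 1 := by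
    intro x
    induction x using FreeGroup.induction_on with
    | C1 => rfl
    | of s => exact isEmptyElim s
    | inv_of s _ => exact isEmptyElim s
    | mul x y hx hy => rw [hx, hy, one_mul]
  refine ⟨(SemidirectProduct.inr).comp p, ?_⟩
  rw [injective_iff_map_eq_one]
  intro g hg
  have hpg : p g = 1 := SemidirectProduct.inr_injective (by simpa using hg)
  have : g ∈ p.ker := hpg
  rw [← hexact] at this
  obtain ⟨x, hx⟩ := this
  rw [← hx, htriv x, map_one]



private theorem caseB {S₀ : Type*} [Nontrivial S₀] {m : ℕ}
    (θ : Multiplicative (ZMod m) →* MulAut (FreeGroup S₀))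
    {G : Type*} [Group G]
    (i : FreeGroup S₀ →* G) (p : G →* Multiplicative (ZMod m))
    (hi : Function.Injective i)
    (hexact : i.range = p.ker)
    (houter : ∀ g : G, ∃ f₀ : FreeGroup S₀, ∀ x : FreeGroup S₀,
      g * i x * g⁻¹ = i (f₀ * θ (p g) x * f₀⁻¹)) :
    ∃ e : G →* FreeGroup S₀ ⋊[θ] Multiplicative (ZMod m), Function.Injective e := by
  classical
  -- the element realizing the outer action
  set f : G → FreeGroup S₀ := fun g => (houter g).choose with hf
  have hfs : ∀ g x, g * i x * g⁻¹ = i (f g * θ (p g) x * (f g)⁻¹) :=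
    fun g => (houter g).choose_spec
  -- conjugation as a function
  set cfun : G → FreeGroup S₀ → FreeGroup S₀ :=
    fun g x => f g * θ (p g) x * (f g)⁻¹ with hcfun
  have hic : ∀ g x, i (cfun g x) = g * i x * g⁻¹ := fun g x => (hfs g x).symm
  have hcomp : ∀ g h x, cfun g (cfun h x) = cfun (g * h) x := by
    intro g h x
    apply hi
    rw [hic, hic, hic]
    group
  have hone : ∀ x, cfun 1 x = x := by
    intro x
    apply hi
    rw [hic]
    group
  have hmul : ∀ g x y, cfun g (x * y) = cfun g x * cfun g y := by
    intro g x y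
    apply hi
    rw [hic, map_mul i (cfun g x) (cfun g y), hic, hic, map_mul i x y]
    group
  -- conjugation as automorphisms
  set cm : G → MulAut (FreeGroup S₀) := fun g =>
    { toFun := cfun g
      invFun := cfun g⁻¹
      left_inv := fun x => by rw [hcomp]; simp [hone]
      right_inv := fun x => by rw [hcomp]; simp [hone]
      map_mul' := hmul g } with hcm
  have hcm_apply : ∀ g x, cm g x = cfun g x := fun g x => rfl
  set c : G →* MulAut (FreeGroup S₀) :=
    MonoidHom.mk' cm (by
      intro g h
      ext x
      exact (hcomp g h x).symm) with hc
  -- the center of the free group is trivial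
  have hcenter : ∀ x : FreeGroup S₀, (∀ y, x * y * x⁻¹ = y) → x = 1 := by
    intro x hx
    apply freeGroup_eq_one_of_central (x := x)
    intro y
    have hxy : x * y = y * x := by
      conv_rhs => rw [← hx y]
      group
    rw [← hxy]
    group
  -- the comparison homomorphisms into `MulAut F × ZMod m`
  have hconjθ : ∀ (k : Multiplicative (ZMod m)) (x : FreeGroup S₀),
      MulAut.conj (θ k x) = θ k * MulAut.conj x * (θ k)⁻¹ := by
    intro k x
    ext y
    simp only [MulAut.conj_apply, MulAut.mul_apply, MulAut.inv_def]
    rw [map_mul, map_mul, MulEquiv.apply_symm_apply, map_inv]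
  set j : (FreeGroup S₀ ⋊[θ] Multiplicative (ZMod m)) →*
      MulAut (FreeGroup S₀) × Multiplicative (ZMod m) :=
    SemidirectProduct.lift
      ((MulAut.conj : FreeGroup S₀ →* MulAut (FreeGroup S₀)).prod 1)
      (θ.prod (MonoidHom.id _))
      (by
        intro k
        ext x
        · simpa using hconjθ k x
        · simp) with hj
  have hj_apply : ∀ a : FreeGroup S₀ ⋊[θ] Multiplicative (ZMod m),
      j a = (MulAut.conj a.left * θ a.right, a.right) := by
    intro a
    apply Prod.ext
    · rfl
    · simp [hj, SemidirectProduct.lift]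
  have hj_inj : Function.Injective j := by
    rw [injective_iff_map_eq_one]
    intro a ha
    rw [hj_apply a] at ha
    rw [Prod.ext_iff] at ha
    obtain ⟨h1, h2⟩ := ha
    simp only [Prod.fst_one, Prod.snd_one] at h1 h2
    rw [h2, map_one, mul_one] at h1
    have hleft : a.left = 1 := by
      apply hcenter
      intro y
      have := DFunLike.congr_fun h1 y
      simpa [MulAut.conj_apply] using this
    have ha' : a = ⟨a.left, a.right⟩ := rfl
    rw [ha', hleft, h2]
    rfl
  -- the homomorphism from G
  set φ : G →* MulAut (FreeGroup S₀) × Multiplicative (ZMod m) := c.prod p with hφ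
  have hφ1 : ∀ g, φ g = 1 → g = 1 := by
    intro g hg
    rw [Prod.ext_iff] at hg
    obtain ⟨h1, h2⟩ := hg
    simp only [hφ, MonoidHom.prod_apply, Prod.fst_one, Prod.snd_one] at h1 h2
    have hker : g ∈ p.ker := h2
    rw [← hexact] at hker
    obtain ⟨x, hx⟩ := hker
    have hx1 : x = 1 := by
      apply hcenter
      intro y
      have h3 : cfun g y = y := by
        show c g y = y
        rw [h1]; rfl
      have h4 : i (cfun g y) = i (x * y * x⁻¹) := by
        rw [hic, ← hx, map_mul, map_mul, map_inv]
      rw [h3] at h4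
      exact (hi h4).symm
    rw [← hx, hx1, map_one]
  have hrange : ∀ g, φ g ∈ j.range := by
    intro g
    refine ⟨⟨f g, p g⟩, ?_⟩
    rw [hj_apply]
    apply Prod.ext
    · show MulAut.conj (f g) * θ (p g) = c g
      ext x
      rfl
    · rfl
  -- assemble the embedding
  set jr : (FreeGroup S₀ ⋊[θ] Multiplicative (ZMod m)) ≃* j.range :=
    MulEquiv.ofBijective j.rangeRestrict
      ⟨fun a b hab => hj_inj (by
          have := congrArg Subtype.val hab
          simpa using this),
        j.rangeRestrict_surjective⟩ with hjr
  refine ⟨jr.symm.toMonoidHom.comp (φ.codRestrict j.range hrange), ?_⟩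
  rw [injective_iff_map_eq_one]
  intro g hg
  apply hφ1
  have : φ.codRestrict j.range hrange g = 1 := by
    have := congrArg jr hg
    simpa using this
  have := congrArg Subtype.val this
  simpa using this


set_option maxHeartbeats 800000 in
private theorem caseA1 {S₀ : Type*} [Subsingleton S₀] (s₀ : S₀) {m : ℕ} [NeZero m]
    (θ : Multiplicative (ZMod m) →* MulAut (FreeGroup S₀))
    (hperm : ∀ (k : Multiplicative (ZMod m)) (s : S₀),
      (∃ t : S₀, θ k (FreeGroup.of s) = FreeGroup.of t) ∨
      (∃ t : S₀, θ k (FreeGroup.of s) = (FreeGroup.of t)⁻¹))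
    {G : Type*} [Group G]
    (i : FreeGroup S₀ →* G) (p : G →* Multiplicative (ZMod m))
    (hi : Function.Injective i) (hp : Function.Surjective p)
    (hexact : i.range = p.ker)
    (houter : ∀ g : G, ∃ f₀ : FreeGroup S₀, ∀ x : FreeGroup S₀,
      g * i x * g⁻¹ = i (f₀ * θ (p g) x * f₀⁻¹)) :
    ∃ e : G →* FreeGroup S₀ ⋊[θ] Multiplicative (ZMod m), Function.Injective e := by
  classical
  -- `FreeGroup S₀ ≃ ℤ`
  set χ : FreeGroup S₀ →* Multiplicative ℤ :=
    FreeGroup.lift (fun _ => Multiplicative.ofAdd (1 : ℤ)) with hχ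
  set σ : Multiplicative ℤ →* FreeGroup S₀ := zpowersHom _ (FreeGroup.of s₀) with hσ
  have hσ_apply : ∀ n : Multiplicative ℤ,
      σ n = FreeGroup.of s₀ ^ (Multiplicative.toAdd n) := fun n => rfl
  have hσχ : ∀ x : FreeGroup S₀, σ (χ x) = x := by
    intro x
    induction x using FreeGroup.induction_on with
    | C1 => rw [map_one, map_one]
    | of s =>
      show σ (χ (FreeGroup.of s)) = FreeGroup.of s
      have hss : s = s₀ := Subsingleton.elim _ _
      rw [hχ, FreeGroup.lift_apply_of, hσ_apply, hss]
      simp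
    | inv_of s ih => rw [map_inv, map_inv, ih]
    | mul x y hx hy => rw [map_mul, map_mul, hx, hy]
  have hcommF : ∀ x y : FreeGroup S₀, x * y = y * x := by
    intro x y
    have h := congrArg σ (mul_comm (χ x) (χ y))
    rw [map_mul, map_mul, hσχ x, hσχ y] at h
    exact h
  have hone : ∀ x : FreeGroup S₀, χ x = 1 → x = 1 := by
    intro x hx
    rw [← hσχ x, hx, map_one]
  have hpowone : ∀ (x : FreeGroup S₀) (n : ℕ), n ≠ 0 → x ^ n = 1 → x = 1 := by
    intro x n hn hxn
    apply hone
    have hc : (χ x) ^ n = 1 := by rw [← map_pow, hxn, map_one]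
    rw [← ofAdd_toAdd (χ x), ← ofAdd_nsmul] at hc
    have h2 : n • Multiplicative.toAdd (χ x) = 0 := by
      have h3 := congrArg Multiplicative.toAdd hc
      simp only [toAdd_ofAdd, toAdd_one] at h3
      exact h3
    have hm : (n : ℤ) ≠ 0 := by exact_mod_cast hn
    have h4 : Multiplicative.toAdd (χ x) = 0 := by
      rw [nsmul_eq_mul] at h2
      exact (mul_eq_zero.1 h2).resolve_left hm
    rw [← ofAdd_toAdd (χ x), h4]
    rfl
  -- the conjugation action of `G` is exactly given by `θ`
  have hc : ∀ (g : G) (x : FreeGroup S₀), g * i x * g⁻¹ = i (θ (p g) x) := by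
    intro g x
    obtain ⟨f₀, hf₀⟩ := houter g
    rw [hf₀ x]
    congr 1
    rw [hcommF f₀ (θ (p g) x), mul_assoc]
    simp
  -- a preimage of the generator of `ZMod m`
  set k₁ : Multiplicative (ZMod m) := Multiplicative.ofAdd (1 : ZMod m) with hk₁
  have hk₁pow : ∀ k : Multiplicative (ZMod m),
      k₁ ^ (Multiplicative.toAdd k).val = k := by
    intro k
    rw [hk₁, ← ofAdd_nsmul, nsmul_eq_mul, mul_one, ZMod.natCast_val, ZMod.cast_id]
    rfl
  have hvcast : ∀ k : Multiplicative (ZMod m),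
      ((Multiplicative.toAdd k).val : ZMod m) = Multiplicative.toAdd k := by
    intro k
    rw [ZMod.natCast_val, ZMod.cast_id]
  have hpm : ∀ g : G, p (g ^ m) = 1 := by
    intro g
    rw [map_pow, ← ofAdd_toAdd (p g), ← ofAdd_nsmul]
    simp [nsmul_eq_mul, ZMod.natCast_self]
  obtain ⟨g₀, hg₀⟩ := hp k₁
  have hpg₀pow : ∀ v : ℕ, p (g₀ ^ v) = k₁ ^ v := by
    intro v; rw [map_pow, hg₀]
  -- decomposition of an arbitrary element of G
  have hdec : ∀ g : G, ∃ x : FreeGroup S₀,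
      i x = g * (g₀ ^ (Multiplicative.toAdd (p g)).val)⁻¹ := by
    intro g
    have hker : g * (g₀ ^ (Multiplicative.toAdd (p g)).val)⁻¹ ∈ p.ker := by
      rw [MonoidHom.mem_ker, map_mul, map_inv, hpg₀pow, hk₁pow, mul_inv_cancel]
    rw [← hexact] at hker
    exact hker
  -- case split on the action of the generator
  have hact := hperm k₁ s₀
  have hact' : θ k₁ (FreeGroup.of s₀) = FreeGroup.of s₀ ∨
      θ k₁ (FreeGroup.of s₀) = (FreeGroup.of s₀)⁻¹ := by
    rcases hact with ⟨t, ht⟩ | ⟨t, ht⟩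
    · left; rw [ht]; congr 1; exact Subsingleton.elim _ _
    · right; rw [ht]; congr 2; exact Subsingleton.elim _ _
  rcases hact' with hfix | hinv
  · -- θ is trivial
    have hθof : ∀ v : ℕ, θ (k₁ ^ v) (FreeGroup.of s₀) = FreeGroup.of s₀ := by
      intro v
      induction v with
      | zero => rw [pow_zero, map_one]; rfl
      | succ v ih => rw [pow_succ, map_mul, MulAut.mul_apply, hfix, ih]
    have hθ : ∀ (k : Multiplicative (ZMod m)) (x : FreeGroup S₀), θ k x = x := by
      intro k x
      conv_lhs => rw [← hσχ x, hσ_apply]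
      rw [map_zpow, ← hk₁pow k, hθof, ← hσ_apply, hσχ]
    -- G is abelian
    have hcent : ∀ (g : G) (x : FreeGroup S₀), g * i x = i x * g := by
      intro g x
      have h1 := hc g x
      rw [hθ] at h1
      exact mul_inv_eq_iff_eq_mul.1 h1
    have hkey : ∀ (x y : FreeGroup S₀) (a b : ℕ),
        (i x * g₀ ^ a) * (i y * g₀ ^ b) = i (x * y) * g₀ ^ (a + b) := by
      intro x y a b
      rw [map_mul, pow_add]
      calc i x * g₀ ^ a * (i y * g₀ ^ b) = i x * (g₀ ^ a * i y) * g₀ ^ b := by group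
      _ = i x * (i y * g₀ ^ a) * g₀ ^ b := by rw [hcent]
      _ = i x * i y * (g₀ ^ a * g₀ ^ b) := by group
    have hGcomm : ∀ g h : G, g * h = h * g := by
      intro g h
      obtain ⟨x, hx⟩ := hdec g
      obtain ⟨y, hy⟩ := hdec h
      have hgx : g = i x * g₀ ^ (Multiplicative.toAdd (p g)).val := by
        rw [hx]; group
      have hhy : h = i y * g₀ ^ (Multiplicative.toAdd (p h)).val := by
        rw [hy]; group
      rw [hgx, hhy, hkey, hkey, hcommF x y, Nat.add_comm]
    -- the m-th power map gives the embedding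
    have hxm : ∀ g : G, ∃ x : FreeGroup S₀, i x = g ^ m := by
      intro g
      have : g ^ m ∈ p.ker := hpm g
      rw [← hexact] at this
      exact this
    set xm : G → FreeGroup S₀ := fun g => (hxm g).choose with hxmdef
    have hxms : ∀ g : G, i (xm g) = g ^ m := fun g => (hxm g).choose_spec
    refine ⟨MonoidHom.mk' (fun g => ⟨xm g, p g⟩) ?_, ?_⟩
    · intro a b
      show (⟨xm (a * b), p (a * b)⟩ : FreeGroup S₀ ⋊[θ] Multiplicative (ZMod m))
        = ⟨xm a, p a⟩ * ⟨xm b, p b⟩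
      rw [SemidirectProduct.mul_def]
      have h1 : xm (a * b) = xm a * θ (p a) (xm b) := by
        rw [hθ]
        apply hi
        rw [map_mul, hxms, hxms, hxms]
        exact Commute.mul_pow (hGcomm a b) m
      have h2 : p (a * b) = p a * p b := map_mul p a b
      rw [h1, h2]
    · rw [injective_iff_map_eq_one]
      intro g hg
      have h1 : xm g = 1 := congrArg SemidirectProduct.left hg
      have h2 : p g = 1 := congrArg SemidirectProduct.right hg
      have hker : g ∈ p.ker := h2
      rw [← hexact] at hker
      obtain ⟨y, hy⟩ := hker
      have h3 : i (y ^ m) = i (xm g) := by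
        rw [map_pow, hy, hxms]
      have h4 : y ^ m = 1 := by rw [hi h3, h1]
      have h5 : y = 1 := hpowone y m (NeZero.ne m) h4
      rw [← hy, h5, map_one]
  · -- θ inverts the generator
    have hθinv : ∀ x : FreeGroup S₀, θ k₁ x = x⁻¹ := by
      intro x
      conv_lhs => rw [← hσχ x, hσ_apply]
      rw [map_zpow, hinv, inv_zpow, ← hσ_apply, hσχ]
    -- a torsion lift of the generator of `ZMod m`
    have hg₀m : g₀ ^ m = 1 := by
      have h1 : g₀ ^ m ∈ p.ker := hpm g₀
      rw [← hexact] at h1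
      obtain ⟨w, hw⟩ := h1
      have h2 : g₀ * i w * g₀⁻¹ = i (θ k₁ w) := by rw [hc, hg₀]
      have h3 : g₀ * i w * g₀⁻¹ = i w := by rw [hw]; group
      have h4 : w = θ k₁ w := hi (h3.symm.trans h2)
      rw [hθinv] at h4
      have h5 : w * w = 1 := mul_eq_one_iff_eq_inv.2 h4
      have h6 : w = 1 := hpowone w 2 (by norm_num) (by rw [pow_two]; exact h5)
      rw [← hw, h6, map_one]
    have hpow_eq : ∀ a b : ℕ, (a : ZMod m) = (b : ZMod m) → g₀ ^ a = g₀ ^ b := by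
      intro a b hab
      have hd : orderOf g₀ ∣ m := orderOf_dvd_of_pow_eq_one hg₀m
      have hmod : a ≡ b [MOD orderOf g₀] :=
        Nat.ModEq.of_dvd hd ((ZMod.natCast_eq_natCast_iff _ _ _).1 hab)
      exact pow_eq_pow_iff_modEq.2 hmod
    set w : G → FreeGroup S₀ := fun g => (hdec g).choose with hwdef
    have hws : ∀ g : G, i (w g) =
        g * (g₀ ^ (Multiplicative.toAdd (p g)).val)⁻¹ := fun g => (hdec g).choose_spec
    have hθconj : ∀ (g : G) (x : FreeGroup S₀),
        i (θ (p g) x) = g₀ ^ (Multiplicative.toAdd (p g)).val * i x *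
          (g₀ ^ (Multiplicative.toAdd (p g)).val)⁻¹ := by
      intro g x
      have h := hc (g₀ ^ (Multiplicative.toAdd (p g)).val) x
      rw [hpg₀pow, hk₁pow] at h
      exact h.symm
    refine ⟨MonoidHom.mk' (fun g => ⟨w g, p g⟩) ?_, ?_⟩
    · intro a b
      show (⟨w (a * b), p (a * b)⟩ : FreeGroup S₀ ⋊[θ] Multiplicative (ZMod m))
        = ⟨w a, p a⟩ * ⟨w b, p b⟩
      rw [SemidirectProduct.mul_def]
      have h2 : p (a * b) = p a * p b := map_mul p a b
      have h1 : w (a * b) = w a * θ (p a) (w b) := by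
        apply hi
        rw [map_mul, hws, hθconj, hws, hws]
        have hexp : g₀ ^ (Multiplicative.toAdd (p (a * b))).val =
            g₀ ^ ((Multiplicative.toAdd (p a)).val + (Multiplicative.toAdd (p b)).val) := by
          apply hpow_eq
          rw [Nat.cast_add, hvcast, hvcast, hvcast, h2, toAdd_mul]
        rw [hexp, pow_add]
        group
      rw [h1, h2]
    · rw [injective_iff_map_eq_one]
      intro g hg
      have h1 : w g = 1 := congrArg SemidirectProduct.left hg
      have h2 : p g = 1 := congrArg SemidirectProduct.right hg
      have h3 := hws g
      rw [h1, h2, map_one] at h3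
      simp only [toAdd_one, ZMod.val_zero, pow_zero, inv_one, mul_one] at h3
      exact h3.symm


/-- Let `F = F(S₀)` be a free group on a finite set and let `ℤ_m` act on `F` by
automorphisms induced by a permutation of the symmetric generating set
`S = S₀ ∪ S₀⁻¹` (i.e. each generator is sent to a generator or to the inverse of a
generator).  Then any group `G` fitting in a short exact sequence
`1 → F → G → ℤ_m → 0` whose induced outer action is the given one embeds into the
semidirect product `F(S₀) ⋊ ℤ_m`. -/
theorem embeds_in_semidirect_of_extension {S₀ : Type*} [Finite S₀] (m : ℕ) [NeZero m]
    (θ : Multiplicative (ZMod m) →* MulAut (FreeGroup S₀))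
    (hperm : ∀ (k : Multiplicative (ZMod m)) (s : S₀),
      (∃ t : S₀, θ k (FreeGroup.of s) = FreeGroup.of t) ∨
      (∃ t : S₀, θ k (FreeGroup.of s) = (FreeGroup.of t)⁻¹))
    {G : Type*} [Group G]
    (i : FreeGroup S₀ →* G) (p : G →* Multiplicative (ZMod m))
    (hi : Function.Injective i) (hp : Function.Surjective p)
    (hexact : i.range = p.ker)
    (houter : ∀ g : G, ∃ f₀ : FreeGroup S₀, ∀ x : FreeGroup S₀,
      g * i x * g⁻¹ = i (f₀ * θ (p g) x * f₀⁻¹)) :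
    ∃ e : G →* FreeGroup S₀ ⋊[θ] Multiplicative (ZMod m), Function.Injective e := by
  rcases subsingleton_or_nontrivial S₀ with hss | hnt
  · rcases isEmpty_or_nonempty S₀ with he | hne
    · exact caseA0 θ i p hexact
    · exact caseA1 (Classical.arbitrary S₀) θ hperm i p hi hp hexact houter
  · exact caseB θ i p hi hexact houter
end

section
/- Let G ⊆ Homeo₊(S¹) be a group acting on the circle admitting a ping-pong partition Θ with interval collection 𝓘 and gap collection 𝓙, relative to a preferred generating set 𝓖. If g₁, g₂ ∈ 𝓖 and I ∈ 𝓘 are such that both images g₁(I) and g₂(I) are 𝓘-Markovian (each equals a union of at least two intervals of 𝓘 together with the gaps between them), then g₁g₂⁻¹ ∈ 𝓖. -/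
open Pointwise

noncomputable section

/-- The set of connected components of a subset `O` of the circle. -/
def comps (O : Set 𝕊) : Set (Set 𝕊) := {I | ∃ x ∈ O, I = connectedComponentIn O x}

section PingPong

variable {G : Type*} [Group G] {V S : Type*}

/-- The preferred generating set `𝓖 = {G_v, α_s(A_s)s}` of a marked virtually free
group: the union of the vertex groups `Gv v` and of the cosets `(A s)·(t s)`. -/
def genSet (Gv : V → Subgroup G) (A : S → Subgroup G) (t : S → G) : Set G :=
  (⋃ v, (Gv v : Set G)) ∪ ⋃ s, (fun a => a * t s) '' (A s : Set G)

variable [MulAction G 𝕊]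

/-- The atoms of the partition `Θ = {U_v, V_s}`. -/
def atomsOf (U : V → Set 𝕊) (Z : S → Set 𝕊) : Set (Set 𝕊) := Set.range U ∪ Set.range Z

/-- The collection `𝓘` of connected components of atoms of `Θ`. -/
def intervalsOf (U : V → Set 𝕊) (Z : S → Set 𝕊) : Set (Set 𝕊) :=
  {I | ∃ O ∈ atomsOf U Z, I ∈ comps O}

/-- The collection `𝓙` of gaps of `𝓘`: the connected components of the complement of
`⋃ 𝓘`. -/
def gapsOf (U : V → Set 𝕊) (Z : S → Set 𝕊) : Set (Set 𝕊) :=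
  {J | ∃ x ∈ (⋃₀ intervalsOf U Z)ᶜ, J = connectedComponentIn (⋃₀ intervalsOf U Z)ᶜ x}

/-- `g(I)` is `𝓘`-Markovian: it is the union of at least two intervals `I₀, …, I_m ∈ 𝓘`
together with (at least one of) the gaps `J₁, …, J_m ∈ 𝓙` between them. -/
def IsMarkovian (U : V → Set 𝕊) (Z : S → Set 𝕊) (g : G) (I : Set 𝕊) : Prop :=
  ∃ 𝓐 : Set (Set 𝕊), 𝓐 ⊆ intervalsOf U Z ∪ gapsOf U Z ∧
    (∃ I₁ ∈ 𝓐 ∩ intervalsOf U Z, ∃ I₂ ∈ 𝓐 ∩ intervalsOf U Z, I₁ ≠ I₂) ∧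
    (𝓐 ∩ gapsOf U Z).Nonempty ∧ g • I = ⋃₀ 𝓐

/-! A Markovian image contains a gap, so it lies in no single atom. For `I ⊆ U v` the
localisation property of `U v` then forces `g ∈ Gv v`, and for `I ⊆ Z s` it forces
`g ∈ A (bar s) * t (bar s)`; in both cases `g₁ g₂⁻¹` lies in a vertex group. -/

lemma subset_of_mem_comps {O I : Set 𝕊} (h : I ∈ comps O) : I ⊆ O := by
  obtain ⟨x, -, rfl⟩ := h
  exact connectedComponentIn_subset O x

section Markovian

variable {U : V → Set 𝕊} {Z : S → Set 𝕊} {g : G} {I : Set 𝕊}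

-- A gap is disjoint from every interval, hence from every atom.
lemma IsMarkovian.not_smul_subset_atom (h : IsMarkovian U Z g I) :
    ¬ ∃ O ∈ atomsOf U Z, g • I ⊆ O := by
  rintro ⟨O, hO, hsub⟩
  obtain ⟨𝓐, -, -, ⟨J, hJ𝓐, x, hx, rfl⟩, heq⟩ := h
  have hxO : x ∈ O := hsub (heq ▸ Set.mem_sUnion.2 ⟨_, hJ𝓐, mem_connectedComponentIn hx⟩)
  exact hx (Set.mem_sUnion.2
    ⟨connectedComponentIn O x, ⟨O, hO, x, hxO, rfl⟩, mem_connectedComponentIn hxO⟩)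

lemma IsMarkovian.of_not_imp_smul_subset_atom {X : Set 𝕊} {P : Prop}
    (h : IsMarkovian U Z g I) (hIX : I ⊆ X) (hloc : ¬ P → ∃ O ∈ atomsOf U Z, g • X ⊆ O) : P := by
  by_contra hP
  obtain ⟨O, hO, hXO⟩ := hloc hP
  exact h.not_smul_subset_atom ⟨O, hO, (Set.smul_set_mono hIX).trans hXO⟩

end Markovian

theorem mul_inv_mem_genSet_of_isMarkovian_general
    (bar : S → S)
    (o : S → V) (Gv : V → Subgroup G) (A : S → Subgroup G) (t : S → G)
    (hAle : ∀ s, A s ≤ Gv (o s))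
    (U : V → Set 𝕊) (Z : S → Set 𝕊)
    (hUloc : ∀ v, ∀ g ∈ genSet Gv A t, g ∉ Gv v →
      ∃ O ∈ atomsOf U Z, g • U v ⊆ O)
    (hZloc : ∀ s, ∀ g ∈ genSet Gv A t, (¬ ∃ a ∈ A (bar s), g = a * t (bar s)) →
      ∃ O ∈ atomsOf U Z, g • Z s ⊆ O) :
    ∀ g₁ ∈ genSet Gv A t, ∀ g₂ ∈ genSet Gv A t, ∀ I ∈ intervalsOf U Z,
      IsMarkovian U Z g₁ I → IsMarkovian U Z g₂ I → g₁ * g₂⁻¹ ∈ genSet Gv A t := by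
  intro g₁ hg₁ g₂ hg₂ I ⟨O, hO, hIO⟩ hM₁ hM₂
  have hIO := subset_of_mem_comps hIO
  have mem_genSet {v : V} {g : G} (hg : g ∈ Gv v) : g ∈ genSet Gv A t :=
    Or.inl (Set.mem_iUnion.2 ⟨v, hg⟩)
  rcases hO with ⟨v, rfl⟩ | ⟨s, rfl⟩
  · have hg₁v := hM₁.of_not_imp_smul_subset_atom hIO (hUloc v g₁ hg₁)
    have hg₂v := hM₂.of_not_imp_smul_subset_atom hIO (hUloc v g₂ hg₂)
    exact mem_genSet (mul_mem hg₁v (inv_mem hg₂v))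
  · obtain ⟨a₁, ha₁, rfl⟩ := hM₁.of_not_imp_smul_subset_atom hIO (hZloc s g₁ hg₁)
    obtain ⟨a₂, ha₂, rfl⟩ := hM₂.of_not_imp_smul_subset_atom hIO (hZloc s g₂ hg₂)
    have hcancel : a₁ * t (bar s) * (a₂ * t (bar s))⁻¹ = a₁ * a₂⁻¹ := by group
    rw [hcancel]
    exact mem_genSet (hAle (bar s) (mul_mem ha₁ (inv_mem ha₂)))

/-- If `G ⊆ Homeo₊(𝕊¹)` admits a ping-pong partition `Θ` with intervals `𝓘` and gaps
`𝓙` relative to the preferred generating set `𝓖`, and `g₁, g₂ ∈ 𝓖`, `I ∈ 𝓘` are such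
that both `g₁(I)` and `g₂(I)` are `𝓘`-Markovian, then `g₁ g₂⁻¹ ∈ 𝓖`. -/
theorem mul_inv_mem_genSet_of_isMarkovian
    (hcont : ∀ g : G, Continuous fun x : 𝕊 => g • x)
    (hor : ∀ g : G, OrientationPreserving fun x : 𝕊 => g • x)
    (bar : S → S) (hbar : ∀ s, bar (bar s) = s)
    (o : S → V) (Gv : V → Subgroup G) (A : S → Subgroup G) (t : S → G)
    (hAle : ∀ s, A s ≤ Gv (o s)) (htbar : ∀ s, t (bar s) = (t s)⁻¹)
    (U : V → Set 𝕊) (Z : S → Set 𝕊)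
    (hZne : ∀ s, (Z s).Nonempty)
    (hUU : Pairwise fun v w : V => Disjoint (U v) (U w))
    (hZZ : Pairwise fun s s' : S => Disjoint (Z s) (Z s'))
    (hUZ : ∀ v s, Disjoint (U v) (Z s))
    (hopen : ∀ O ∈ atomsOf U Z, IsOpen O)
    (hfin : ∀ O ∈ atomsOf U Z, (comps O).Finite)
    (hUloc : ∀ v, ∀ g ∈ genSet Gv A t, g ∉ Gv v →
      ∃ O ∈ atomsOf U Z, g • U v ⊆ O)
    (hZloc : ∀ s, ∀ g ∈ genSet Gv A t, (¬ ∃ a ∈ A (bar s), g = a * t (bar s)) →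
      ∃ O ∈ atomsOf U Z, g • Z s ⊆ O)
    (hPPP3 : ∀ g ∈ genSet Gv A t, ∀ I ∈ intervalsOf U Z,
      (∃ O ∈ atomsOf U Z, g • I ⊆ O) ∨ IsMarkovian U Z g I) :
    ∀ g₁ ∈ genSet Gv A t, ∀ g₂ ∈ genSet Gv A t, ∀ I ∈ intervalsOf U Z,
      IsMarkovian U Z g₁ I → IsMarkovian U Z g₂ I → g₁ * g₂⁻¹ ∈ genSet Gv A t :=
  mul_inv_mem_genSet_of_isMarkovian_general bar o Gv A t hAle U Z hUloc hZloc

end PingPong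
end
end
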